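/- arXiv:2501.12154 — 7 statements merged into one kernel-verified Lean document; each statement's English description precedes it below -/
import Mathlib

section
/- The polynomial φ(T) = (T − a)^{q+1} + b·(T − a) − (x − a)^{q+1}/g(x) = T^{q+1} − a·T^{q} + (b − a^{q})·T + (a^{q} − b)·a − (x − a)^{q+1}/g(x), regarded as a polynomial in T with coefficients in the rational function field K(x), is irreducible over K(x). -/
open Polynomial

/-- Chevalley: any valuation subring of `F` extends to a valuation subring of any
field extension `L` of `F`. -/
lemma exists_valuationSubring_extension (F L : Type*) [Field F] [Field L] [Algebra F L]
    (O : ValuationSubring F) :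
    ∃ B : ValuationSubring L, ∀ y : F, algebraMap F L y ∈ B ↔ y ∈ O := by
  haveI : IsLocalRing O := O.isLocalRing
  obtain ⟨B, h, hloc⟩ :=
    IsLocalRing.exists_factor_valuationRing ((algebraMap F L).comp (O.subtype))
  refine ⟨B, fun y => ⟨fun hy => ?_, fun hy => h ⟨y, hy⟩⟩⟩
  by_contra hyO
  have hy0 : y ≠ 0 := fun h0 => hyO (h0 ▸ zero_mem _)
  have hyinv : y⁻¹ ∈ O := (O.mem_or_inv_mem y).resolve_left hyO
  have hz : ¬ IsUnit (⟨y⁻¹, hyinv⟩ : O) := by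
    rintro hz
    obtain ⟨t, ht⟩ := isUnit_iff_exists_inv.mp hz
    apply hyO
    have : (t : F) = y := by
      have h1 : y⁻¹ * (t : F) = 1 := congrArg Subtype.val ht
      field_simp at h1
      exact h1
    exact this ▸ t.2
  apply hz
  apply hloc.1
  refine isUnit_iff_exists_inv.mpr ⟨⟨algebraMap F L y, hy⟩, ?_⟩
  ext
  show algebraMap F L y⁻¹ * algebraMap F L y = 1
  rw [← map_mul, inv_mul_cancel₀ hy0, map_one]

lemma RatFunc.intDegree_pow' {K : Type*} [Field K] {x : RatFunc K} (hx : x ≠ 0) (n : ℕ) :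
    (x ^ n).intDegree = n * x.intDegree := by
  induction n with
  | zero => simp [RatFunc.intDegree_one]
  | succ n ih =>
      rw [pow_succ, RatFunc.intDegree_mul (pow_ne_zero _ hx) hx, ih]
      push_cast; ring

/-- The polynomial φ(T) = (T − a)^{q+1} + b·(T − a) − (x − a)^{q+1}/g(x),
regarded as a polynomial in T over the rational function field K(x), is irreducible. -/
theorem phi_irreducible
    (K : Type*) [Field K] [IsAlgClosed K] (p : ℕ) (hp : p.Prime) [CharP K p]
    (n : ℕ) (hn : 1 ≤ n) (q m : ℕ) (hq : q = p ^ n) (hm : m = q + 1)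
    (a b : K) (hb : b ≠ 0)
    (g : Polynomial K) (hga : g.eval a ≠ 0) (hgdeg : g.natDegree < m)
    (hgcd : Nat.gcd (m - g.natDegree) m = 1) :
    Irreducible ((X - C (RatFunc.C a)) ^ m + C (RatFunc.C b) * (X - C (RatFunc.C a))
      - C ((RatFunc.X - RatFunc.C a) ^ m / algebraMap (Polynomial K) (RatFunc K) g)
      : Polynomial (RatFunc K)) := by
  classical
  have hq2 : 2 ≤ q := by
    rw [hq]
    calc 2 ≤ p := hp.two_le
    _ = p ^ 1 := (pow_one p).symm
    _ ≤ p ^ n := Nat.pow_le_pow_right hp.pos hn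
  have hm2 : 2 ≤ m := by omega
  -- the function f
  set fK : RatFunc K :=
    (RatFunc.X - RatFunc.C a) ^ m / algebraMap (Polynomial K) (RatFunc K) g with hfK
  have hg0 : g ≠ 0 := fun h => hga (by simp [h])
  have hnum : (RatFunc.X - RatFunc.C a) ^ m
      = algebraMap (Polynomial K) (RatFunc K) ((Polynomial.X - Polynomial.C a) ^ m) := by
    rw [map_pow, map_sub, RatFunc.algebraMap_X, RatFunc.algebraMap_C]
  have hnum0 : ((Polynomial.X - Polynomial.C a) ^ m : Polynomial K) ≠ 0 :=
    pow_ne_zero _ (Polynomial.X_sub_C_ne_zero a)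
  have hf0 : fK ≠ 0 := by
    rw [hfK, hnum]
    exact div_ne_zero (RatFunc.algebraMap_ne_zero hnum0) (RatFunc.algebraMap_ne_zero hg0)
  set d : ℕ := m - g.natDegree with hd
  have hd1 : 1 ≤ d := by omega
  have hfd : fK.intDegree = (d : ℤ) := by
    have hmul : fK * algebraMap (Polynomial K) (RatFunc K) g
        = algebraMap (Polynomial K) (RatFunc K) ((Polynomial.X - Polynomial.C a) ^ m) := by
      rw [hfK, hnum, div_mul_cancel₀ _ (RatFunc.algebraMap_ne_zero hg0)]
    have := RatFunc.intDegree_mul hf0 (RatFunc.algebraMap_ne_zero hg0)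
    rw [hmul, RatFunc.intDegree_polynomial, RatFunc.intDegree_polynomial] at this
    have hdeg : ((Polynomial.X - Polynomial.C a) ^ m).natDegree = m := by
      simp [Polynomial.natDegree_pow]
    rw [hdeg] at this
    have : fK.intDegree = (m : ℤ) - (g.natDegree : ℤ) := by omega
    rw [this, hd]
    push_cast [Nat.cast_sub hgdeg.le]
    ring
  -- the polynomial φ
  set φ : Polynomial (RatFunc K) :=
    (X - C (RatFunc.C a)) ^ m + C (RatFunc.C b) * (X - C (RatFunc.C a)) - C fK with hφ
  have hφ' : φ = (X - C (RatFunc.C a)) ^ m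
      + (C (RatFunc.C b) * (X - C (RatFunc.C a)) - C fK) := by rw [hφ]; ring
  have hmonpow : ((X - C (RatFunc.C a)) ^ m : Polynomial (RatFunc K)).Monic :=
    (monic_X_sub_C _).pow m
  have hdegpow : ((X - C (RatFunc.C a)) ^ m : Polynomial (RatFunc K)).degree = m := by
    rw [Polynomial.degree_pow, Polynomial.degree_X_sub_C]; simp
  have hdeglow : (C (RatFunc.C b) * (X - C (RatFunc.C a)) - C fK
      : Polynomial (RatFunc K)).degree < m := by
    apply lt_of_le_of_lt (Polynomial.degree_sub_le _ _)
    rw [max_lt_iff]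
    constructor
    · apply lt_of_le_of_lt (Polynomial.degree_mul_le _ _)
      have h1 : (C (RatFunc.C b) : Polynomial (RatFunc K)).degree ≤ 0 := Polynomial.degree_C_le
      have h2 : ((X - C (RatFunc.C a)) : Polynomial (RatFunc K)).degree = 1 :=
        Polynomial.degree_X_sub_C _
      calc (C (RatFunc.C b) : Polynomial (RatFunc K)).degree
            + (X - C (RatFunc.C a)).degree ≤ 0 + 1 := add_le_add h1 h2.le
      _ = 1 := by simp
      _ < m := by
          simp only [Nat.cast_lt_ofNat, Nat.one_lt_cast]
          exact_mod_cast Nat.lt_of_lt_of_le one_lt_two hm2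
    · exact lt_of_le_of_lt Polynomial.degree_C_le (by positivity)
  have hφdlt : (C (RatFunc.C b) * (X - C (RatFunc.C a)) - C fK
      : Polynomial (RatFunc K)).degree < ((X - C (RatFunc.C a)) ^ m
      : Polynomial (RatFunc K)).degree := by rw [hdegpow]; exact hdeglow
  have hφmonic : φ.Monic := by
    rw [hφ']
    exact hmonpow.add_of_left hφdlt
  have hφdeg : φ.degree = m := by
    rw [hφ', Polynomial.degree_add_eq_left_of_degree_lt hφdlt, hdegpow]
  have hφnat : φ.natDegree = m := Polynomial.natDegree_eq_of_degree_eq_some hφdeg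
  have hφ0 : φ ≠ 0 := hφmonic.ne_zero
  -- the valuation at infinity
  set v : Valuation (RatFunc K) (WithZero (Multiplicative ℤ)) := FunctionField.inftyValuation K with hv
  have hvne : ∀ y : RatFunc K, y ≠ 0 →
      v y = ((Multiplicative.ofAdd y.intDegree : Multiplicative ℤ) : WithZero (Multiplicative ℤ)) := by
    intro y hy
    rw [hv]
    exact FunctionField.inftyValuation_of_nonzero K hy
  -- extend the valuation ring to the algebraic closure
  set L := AlgebraicClosure (RatFunc K) with hL
  obtain ⟨B, hB⟩ := exists_valuationSubring_extension (RatFunc K) L v.valuationSubring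
  set w := B.valuation with hw
  set ψ := algebraMap (RatFunc K) L with hψ
  have key : ∀ y : RatFunc K, w (ψ y) ≤ 1 ↔ v y ≤ 1 := fun y =>
    (B.valuation_le_one_iff _).trans ((hB y).trans (v.mem_valuationSubring_iff y))
  have keyC : ∀ y : RatFunc K, y ≠ 0 → w (ψ y) = 1 → y.intDegree = 0 := by
    intro y hy h1
    have h2 : v y ≤ 1 := (key y).mp h1.le
    have h3 : (v y)⁻¹ ≤ 1 := by
      rw [← map_inv₀ v]
      apply (key y⁻¹).mp
      rw [map_inv₀ ψ, map_inv₀ w, h1, inv_one]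
    have hvy0 : v y ≠ 0 := v.ne_zero_iff.mpr hy
    have h4 : v y = 1 := le_antisymm h2 ((inv_le_one₀ (zero_lt_iff.mpr hvy0)).mp h3)
    rw [hvne y hy, ← WithZero.coe_one, WithZero.coe_inj] at h4
    have := congrArg Multiplicative.toAdd h4
    simpa using this
  have hCle : ∀ c : K, w (ψ (RatFunc.C c)) ≤ 1 := by
    intro c
    apply (key _).mpr
    by_cases hc : (RatFunc.C c : RatFunc K) = 0
    · rw [hc]; simp
    · rw [hvne _ hc, RatFunc.intDegree_C, ← WithZero.coe_one, WithZero.coe_le_coe]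
      simp
  have hwf : 1 < w (ψ fK) := by
    by_contra h
    push_neg at h
    have h2 := (key fK).mp h
    rw [hvne fK hf0, hfd, ← WithZero.coe_one, WithZero.coe_le_coe] at h2
    rw [← Multiplicative.toAdd_le] at h2
    simp at h2
    omega
  -- all roots of φ in L have the same valuation, an m-th root of w (ψ fK)
  have hroot : ∀ α ∈ (φ.map ψ).roots, 1 < w α ∧ (w α) ^ m = w (ψ fK) := by
    intro α hα
    have hev : Polynomial.eval α (φ.map ψ) = 0 :=
      (Polynomial.mem_roots (by
        apply Polynomial.map_ne_zero hφ0)).mp hα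
    rw [Polynomial.eval_map] at hev
    rw [hφ] at hev
    simp only [Polynomial.eval₂_sub, Polynomial.eval₂_add, Polynomial.eval₂_mul,
      Polynomial.eval₂_pow, Polynomial.eval₂_X, Polynomial.eval₂_C] at hev
    set A' := ψ (RatFunc.C a) with hA'
    set B' := ψ (RatFunc.C b) with hB'
    set F' := ψ fK with hF'
    have heq : (α - A') ^ m + B' * (α - A') = F' := by linear_combination hev
    set β := α - A' with hβdef
    have hwb : w B' ≤ 1 := hCle b
    have hwa : w A' ≤ 1 := hCle a
    have hβ : 1 < w β := by
      by_contra hcon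
      push_neg at hcon
      have h1 : w (β ^ m + B' * β) ≤ 1 := by
        apply le_trans (w.map_add _ _)
        apply max_le
        · rw [map_pow]; exact pow_le_one₀ zero_le' hcon
        · rw [map_mul]; exact mul_le_one' hwb hcon
      rw [heq] at h1
      exact absurd h1 (not_le.mpr hwf)
    have hpow : (w β) ^ m = w F' := by
      have h1 : w (B' * β) < w (β ^ m) := by
        rw [map_mul, map_pow]
        calc w B' * w β ≤ 1 * w β := mul_le_mul_left hwb _
        _ = w β := one_mul _
        _ = (w β) ^ 1 := (pow_one _).symm
        _ < (w β) ^ m := pow_lt_pow_right₀ hβ (by omega)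
      rw [← heq, Valuation.map_add_eq_of_lt_left _ h1, map_pow]
    have hwαβ : w α = w β := by
      have hαeq : α = β + A' := by rw [hβdef]; ring
      rw [hαeq, Valuation.map_add_eq_of_lt_left _ (lt_of_le_of_lt hwa hβ)]
    exact ⟨hwαβ ▸ hβ, by rw [hwαβ]; exact hpow⟩
  constructor
  · exact Polynomial.not_isUnit_of_natDegree_pos φ (by omega)
  intro Q R hQR
  by_contra hcon
  push_neg at hcon
  obtain ⟨hQu, hRu⟩ := hcon
  have hQ0 : Q ≠ 0 := fun h => hφ0 (by rw [hQR, h, zero_mul])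
  have hR0 : R ≠ 0 := fun h => hφ0 (by rw [hQR, h, mul_zero])
  have hQnat : 0 < Q.natDegree := by
    rcases Nat.eq_zero_or_pos Q.natDegree with h | h
    · obtain ⟨c, hc⟩ := Polynomial.natDegree_eq_zero.mp h
      have hc0 : c ≠ 0 := fun h0 => hQ0 (by rw [← hc, h0, Polynomial.C_0])
      exact absurd (hc ▸ Polynomial.isUnit_C.mpr (isUnit_iff_ne_zero.mpr hc0)) hQu
    · exact h
  have hRnat : 0 < R.natDegree := by
    rcases Nat.eq_zero_or_pos R.natDegree with h | h
    · obtain ⟨c, hc⟩ := Polynomial.natDegree_eq_zero.mp h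
      have hc0 : c ≠ 0 := fun h0 => hR0 (by rw [← hc, h0, Polynomial.C_0])
      exact absurd (hc ▸ Polynomial.isUnit_C.mpr (isUnit_iff_ne_zero.mpr hc0)) hRu
    · exact h
  have hlc0 : Q.leadingCoeff ≠ 0 := Polynomial.leadingCoeff_ne_zero.mpr hQ0
  have hlci0 : (Q.leadingCoeff)⁻¹ ≠ 0 := inv_ne_zero hlc0
  set Q₁ := Q * C (Q.leadingCoeff)⁻¹ with hQ₁
  set R₁ := C (Q.leadingCoeff) * R with hR₁
  have hQ₁monic : Q₁.Monic := Polynomial.monic_mul_leadingCoeff_inv hQ0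
  have hφQR : φ = Q₁ * R₁ := by
    rw [hQ₁, hR₁, mul_assoc, ← mul_assoc (C (Q.leadingCoeff)⁻¹), ← Polynomial.C_mul,
      inv_mul_cancel₀ hlc0, Polynomial.C_1, one_mul, hQR]
  have hQ₁0 : Q₁ ≠ 0 := hQ₁monic.ne_zero
  have hR₁0 : R₁ ≠ 0 := mul_ne_zero (fun h => hlc0 (Polynomial.C_eq_zero.mp h)) hR0
  set k := Q₁.natDegree with hkdef
  have hknat : k = Q.natDegree := by
    rw [hkdef, hQ₁, Polynomial.natDegree_mul hQ0 (fun h => hlci0 (Polynomial.C_eq_zero.mp h)),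
      Polynomial.natDegree_C, add_zero]
  have hR₁nat : R₁.natDegree = R.natDegree := by
    rw [hR₁, Polynomial.natDegree_mul (fun h => hlc0 (Polynomial.C_eq_zero.mp h)) hR0,
      Polynomial.natDegree_C, zero_add]
  have hsum : k + R₁.natDegree = m := by
    rw [← hφnat, hφQR, Polynomial.natDegree_mul hQ₁0 hR₁0]
  have hk1 : 1 ≤ k := by omega
  have hkm : k < m := by omega
  -- pass to the algebraic closure
  set QL := Q₁.map ψ with hQL
  have hQLmonic : QL.Monic := hQ₁monic.map ψ
  have hQLsplits : QL.Splits :=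
    IsAlgClosed.splits QL
  have hQLnat : QL.natDegree = k := by rw [hQL, Polynomial.natDegree_map]
  have hcard : Multiset.card QL.roots = k := by
    rw [← hQLnat]; exact Polynomial.splits_iff_card_roots.mp hQLsplits
  have hφL0 : φ.map ψ ≠ 0 := Polynomial.map_ne_zero hφ0
  have hQdvd : Q₁ ∣ φ := Dvd.intro _ hφQR.symm
  have hsubset : QL.roots ≤ (φ.map ψ).roots :=
    Polynomial.roots.le_of_dvd hφL0 (Polynomial.map_dvd ψ hQdvd)
  obtain ⟨α₀, hα₀⟩ : ∃ α, α ∈ QL.roots := by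
    apply Multiset.exists_mem_of_ne_zero
    intro h0
    rw [h0] at hcard
    simp at hcard
    omega
  set γ := w α₀ with hγdef
  obtain ⟨hγ1, hγm⟩ := hroot α₀ (Multiset.mem_of_le hsubset hα₀)
  have hall : ∀ α ∈ QL.roots, w α = γ := by
    intro α hα
    obtain ⟨h1, h2⟩ := hroot α (Multiset.mem_of_le hsubset hα)
    have h3 : w α ^ m = γ ^ m := by rw [h2, hγm]
    rcases lt_trichotomy (w α) γ with h | h | h
    · exact absurd h3 (ne_of_lt (pow_lt_pow_left₀ h zero_le' (by omega)))
    · exact h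
    · exact absurd h3.symm (ne_of_lt (pow_lt_pow_left₀ h zero_le' (by omega)))
  have hQ₀eq : QL.coeff 0 = (-1) ^ k * QL.roots.prod := by
    rw [← hQLnat]
    exact hQLsplits.coeff_zero_eq_prod_roots_of_monic hQLmonic
  set Q₀ := Q₁.coeff 0 with hQ₀def
  have hwQ0 : w (ψ Q₀) = γ ^ k := by
    have hcm : ψ Q₀ = QL.coeff 0 := (Polynomial.coeff_map ψ 0).symm
    have hrepl : QL.roots.map w = Multiset.replicate k γ := by
      apply Multiset.eq_replicate.mpr
      refine ⟨by rw [Multiset.card_map, hcard], ?_⟩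
      intro x hx
      obtain ⟨α, hα, rfl⟩ := Multiset.mem_map.mp hx
      exact hall α hα
    rw [hcm, hQ₀eq, map_mul, map_pow, Valuation.map_neg, Valuation.map_one, one_pow, one_mul,
      map_multiset_prod, hrepl, Multiset.prod_replicate]
  have hγ0 : γ ≠ 0 := (zero_lt_one.trans hγ1).ne'
  have hQ₀0 : Q₀ ≠ 0 := by
    intro h0
    apply pow_ne_zero k hγ0
    rw [← hwQ0, h0, map_zero, map_zero]
  set y := Q₀ ^ m / fK ^ k with hydef
  have hy0 : y ≠ 0 := div_ne_zero (pow_ne_zero _ hQ₀0) (pow_ne_zero _ hf0)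
  have hwy : w (ψ y) = 1 := by
    rw [hydef, map_div₀, map_pow, map_pow, map_div₀, map_pow, map_pow, hwQ0, ← hγm,
      ← pow_mul, ← pow_mul, Nat.mul_comm, div_self (pow_ne_zero _ hγ0)]
  have he0 : y.intDegree = 0 := keyC y hy0 hwy
  have hmul2 : y * fK ^ k = Q₀ ^ m := div_mul_cancel₀ _ (pow_ne_zero _ hf0)
  have hIdeg : y.intDegree + (fK ^ k).intDegree = (Q₀ ^ m).intDegree := by
    rw [← RatFunc.intDegree_mul hy0 (pow_ne_zero _ hf0), hmul2]
  rw [he0, RatFunc.intDegree_pow' hf0, RatFunc.intDegree_pow' hQ₀0, hfd, zero_add] at hIdeg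
  have hdvd : (m : ℤ) ∣ (k : ℤ) * (d : ℤ) := ⟨Q₀.intDegree, hIdeg⟩
  have hdvdN : m ∣ k * d := by
    have := Int.natCast_dvd_natCast.mpr (dvd_refl m)
    exact_mod_cast hdvd
  have hco : Nat.Coprime m d := Nat.coprime_comm.mp hgcd
  have hmk : m ∣ k := hco.dvd_of_dvd_mul_right hdvdN
  have := Nat.le_of_dvd (by omega) hmk
  omega
end

section
/- The quotient K(x)[T]/(φ(T)) is a field, and its dimension as a vector space over the rational function field K(x) equals m = q + 1. -/
open Polynomial

section SwapAux

/-- The "swap the two variables" ring homomorphism on `K[x][y]`. -/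
noncomputable def swapHom (K : Type*) [CommRing K] :
    Polynomial (Polynomial K) →+* Polynomial (Polynomial K) :=
  eval₂RingHom (eval₂RingHom (C.comp C) X) (C X)

lemma swapHom_C {K : Type*} [CommRing K] (p : Polynomial K) : swapHom K (C p) = p.map C := by
  simp [swapHom, Polynomial.map]

lemma swapHom_X {K : Type*} [CommRing K] :
    swapHom K (X : Polynomial (Polynomial K)) = C X := by
  simp [swapHom]

lemma swapHom_map_C {K : Type*} [CommRing K] (p : Polynomial K) : swapHom K (p.map C) = C p := by
  induction p using Polynomial.induction_on' with
  | add p q hp hq => simp [hp, hq]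
  | monomial n k =>
      rw [Polynomial.map_monomial, ← C_mul_X_pow_eq_monomial, ← C_mul_X_pow_eq_monomial,
        map_mul, map_pow, swapHom_X, swapHom_C, map_C, ← C_pow, ← C_mul]

lemma swapHom_swapHom {K : Type*} [CommRing K] (p : Polynomial (Polynomial K)) :
    swapHom K (swapHom K p) = p := by
  induction p using Polynomial.induction_on' with
  | add p q hp hq => simp [hp, hq]
  | monomial n k =>
      rw [← C_mul_X_pow_eq_monomial]
      simp [swapHom_C, swapHom_X, swapHom_map_C, map_X]

/-- The "swap the two variables" ring isomorphism on `K[x][y]`. -/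
noncomputable def swapEquiv (K : Type*) [CommRing K] :
    Polynomial (Polynomial K) ≃+* Polynomial (Polynomial K) :=
  RingEquiv.ofRingHom (swapHom K) (swapHom K)
    (RingHom.ext (swapHom_swapHom)) (RingHom.ext (swapHom_swapHom))

end SwapAux

section FieldAux

variable {K : Type*} [Field K] (a b : K) (m : ℕ) (g : Polynomial K)

/-- The polynomial `u^m - (y^m + b y) * g(u + a)` as a polynomial in `u` over `K[y]`. -/
noncomputable def eisPoly : Polynomial (Polynomial K) :=
  X ^ m - C (X ^ m + C b * X) * ((g.comp (X + C a)).map C)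

/-- The curve polynomial `(x-a)^m - (y^m + by) g(x)` as a polynomial in `y` over `K[x]`. -/
noncomputable def curvePoly : Polynomial (Polynomial K) :=
  C ((X - C a) ^ m) - (X ^ m + C (C b) * X) * C g

lemma eisPoly_irreducible (hb : b ≠ 0) (hga : g.eval a ≠ 0) (m' : ℕ) (hm : m = m' + 2)
    (hgdeg : g.natDegree < m) : Irreducible (eisPoly a b m g) := by
  subst hm
  set h : Polynomial K := g.comp (X + C a) with hh
  have hh0 : h.coeff 0 = g.eval a := by
    rw [coeff_zero_eq_eval_zero, hh, eval_comp]; simp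
  have hhdeg : h.natDegree = g.natDegree := by
    rw [hh, natDegree_comp, natDegree_X_add_C, mul_one]
  have hhne : h ≠ 0 := fun hz => hga (by rw [← hh0, hz, coeff_zero])
  set w : Polynomial K := X ^ (m' + 2) + C b * X with hw
  have hXw : X ∣ w := ⟨X ^ (m' + 1) + C b, by rw [hw]; ring⟩
  have hdegt : (C w * (h.map C)).degree < ((m' + 2 : ℕ) : WithBot ℕ) := by
    refine lt_of_le_of_lt (degree_mul_le _ _) ?_
    have h1 : (C w).degree ≤ 0 := degree_C_le
    have h2 : (h.map C).degree ≤ ((m' + 1 : ℕ) : WithBot ℕ) := by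
      refine le_trans (degree_map_le) ?_
      refine le_trans degree_le_natDegree ?_
      rw [hhdeg]
      exact_mod_cast (show g.natDegree ≤ m' + 1 by omega)
    calc (C w).degree + (h.map C).degree ≤ 0 + ((m' + 1 : ℕ) : WithBot ℕ) := add_le_add h1 h2
      _ < ((m' + 2 : ℕ) : WithBot ℕ) := by
          rw [zero_add]; exact_mod_cast Nat.lt_succ_self _
  have hdegf : (eisPoly a b (m' + 2) g).degree = ((m' + 2 : ℕ) : WithBot ℕ) := by
    rw [eisPoly, degree_sub_eq_left_of_degree_lt (by rw [degree_X_pow]; exact hdegt),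
      degree_X_pow]
  have hcoeff : ∀ n : ℕ, ((eisPoly a b (m' + 2) g).coeff n)
      = (if n = m' + 2 then 1 else 0) - w * C (h.coeff n) := by
    intro n
    rw [eisPoly, coeff_sub, coeff_X_pow, coeff_C_mul, coeff_map]
  have hc : h.coeff (m' + 2) = 0 :=
    coeff_eq_zero_of_natDegree_lt (by rw [hhdeg]; exact hgdeg)
  refine irreducible_of_eisenstein_criterion
    (P := Ideal.span {(X : Polynomial K)})
    ((Ideal.span_singleton_prime X_ne_zero).mpr prime_X) ?_ ?_ ?_ ?_ ?_
  · -- leading coeff not in span X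
    have : (eisPoly a b (m' + 2) g).leadingCoeff = 1 := by
      rw [leadingCoeff, natDegree_eq_of_degree_eq_some hdegf, hcoeff, hc]
      simp
    rw [this, Ideal.mem_span_singleton]
    exact fun hdvd => Polynomial.not_isUnit_X (isUnit_of_dvd_one hdvd)
  · intro n hn
    rw [hdegf] at hn
    have hn' : n < m' + 2 := by exact_mod_cast hn
    have hnm : n ≠ m' + 2 := by omega
    rw [hcoeff, if_neg hnm, zero_sub, Ideal.mem_span_singleton]
    exact dvd_neg.mpr (hXw.mul_right _)
  · rw [hdegf]; exact_mod_cast Nat.succ_pos _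
  · rw [hcoeff, if_neg (by omega), zero_sub, Ideal.span_singleton_pow, Ideal.mem_span_singleton]
    intro hdvd
    have h1 : (w * C (h.coeff 0)).coeff 1 = 0 :=
      (X_pow_dvd_iff).mp (dvd_neg.mp hdvd) 1 (by omega)
    rw [coeff_mul_C, hw] at h1
    simp [coeff_X_pow] at h1
    rcases h1 with h1 | h1
    · exact hb h1
    · exact hga (by rw [← hh0]; exact h1)
  · refine Monic.isPrimitive ?_
    rw [Monic, leadingCoeff, natDegree_eq_of_degree_eq_some hdegf, hcoeff, hc]
    simp

lemma swap_eisPoly : swapHom K (eisPoly a b m g)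
    = C (X ^ m) - (X ^ m + C (C b) * X) * C (g.comp (X + C a)) := by
  rw [eisPoly, map_sub, map_pow, swapHom_X, map_mul, swapHom_C, swapHom_map_C, ← C_pow]
  rw [Polynomial.map_add, Polynomial.map_pow, map_X, Polynomial.map_mul, map_C, map_X]

lemma curvePoly_eq : (Polynomial.mapEquiv (algEquivAevalXAddC (-a)).toRingEquiv)
    (swapHom K (eisPoly a b m g)) = curvePoly a b m g := by
  rw [swap_eisPoly, curvePoly, mapEquiv_apply]
  simp only [Polynomial.map_sub, Polynomial.map_mul, Polynomial.map_add, Polynomial.map_pow,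
    map_X, map_C, RingEquiv.coe_toRingHom, AlgEquiv.toRingEquiv_eq_coe, AlgEquiv.coe_ringEquiv,
    algEquivAevalXAddC_apply, map_pow, aeval_X, aeval_C, aeval_comp, map_add, aeval_X_left_apply]
  simp only [algebraMap_eq]
  rw [show (X : Polynomial K) + C (-a) + C a = X by rw [C_neg]; ring, aeval_X_left_apply,
    show (C X + C (C (-a)) : Polynomial (Polynomial K)) = C (X - C a) by
      simp [C_neg, sub_eq_add_neg]]

lemma curvePoly_irreducible (hb : b ≠ 0) (hga : g.eval a ≠ 0) (m' : ℕ) (hm : m = m' + 2)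
    (hgdeg : g.natDegree < m) : Irreducible (curvePoly a b m g) := by
  rw [← curvePoly_eq]
  exact (MulEquiv.irreducible_iff _).mpr
    ((MulEquiv.irreducible_iff (swapEquiv K)).mpr (eisPoly_irreducible a b m g hb hga m' hm hgdeg))

lemma curvePoly_isPrimitive (hga : g.eval a ≠ 0) (m' : ℕ) (hm : m = m' + 2) :
    (curvePoly a b m g).IsPrimitive := by
  subst hm
  intro r hr
  rw [C_dvd_iff_dvd_coeff] at hr
  have h0 := hr 0
  have hmm := hr (m' + 2)
  simp only [curvePoly, coeff_sub, coeff_C, coeff_add, coeff_X_pow, coeff_C_mul, coeff_X,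
    coeff_mul_C, if_pos rfl] at h0 hmm
  norm_num at h0 hmm
  have hco : IsCoprime ((X - C a) ^ (m' + 2)) g :=
    IsCoprime.pow_left (((irreducible_X_sub_C a).coprime_iff_not_dvd).mpr
      (fun hd => hga ((dvd_iff_isRoot).mp hd)))
  exact hco.isUnit_of_dvd' h0 hmm

end FieldAux

open scoped Classical in
/-- A (noncanonical) normalization monoid structure on a field. -/
noncomputable def fieldNormalizationMonoid (K : Type*) [Field K] : NormalizationMonoid K where
  normUnit x := if h : x = 0 then 1 else (Units.mk0 x h)⁻¹
  normUnit_zero := dif_pos rfl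
  normUnit_one := by
    ext
    simp
  normUnit_mul_units {x} u hx := by
    ext
    simp [hx, mul_inv, mul_comm]

/-- The quotient K(x)[T]/(φ(T)) is a field, and its dimension as a vector
space over K(x) equals m = q + 1. -/
theorem adjoinRoot_phi_isField_and_finrank
    (K : Type*) [Field K] [IsAlgClosed K] (p : ℕ) (hp : p.Prime) [CharP K p]
    (n : ℕ) (hn : 1 ≤ n) (q m : ℕ) (hq : q = p ^ n) (hm : m = q + 1)
    (a b : K) (hb : b ≠ 0)
    (g : Polynomial K) (hga : g.eval a ≠ 0) (hgdeg : g.natDegree < m)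
    (hgcd : Nat.gcd (m - g.natDegree) m = 1)
    (φ : Polynomial (RatFunc K))
    (hφ : φ = (X - C (RatFunc.C a)) ^ m + C (RatFunc.C b) * (X - C (RatFunc.C a))
      - C ((RatFunc.X - RatFunc.C a) ^ m / algebraMap (Polynomial K) (RatFunc K) g)) :
    IsField (AdjoinRoot φ) ∧ Module.finrank (RatFunc K) (AdjoinRoot φ) = m := by
  -- basic numerology
  have hq2 : 2 ≤ q := by
    rw [hq]
    calc 2 ≤ p := hp.two_le
    _ = p ^ 1 := (pow_one p).symm
    _ ≤ p ^ n := Nat.pow_le_pow_right hp.pos hn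
  obtain ⟨m', hm' ⟩ : ∃ m', m = m' + 2 := ⟨m - 2, by omega⟩
  -- set up notation
  set A : RatFunc K := RatFunc.C a with hA
  set B : RatFunc K := RatFunc.C b with hB
  set g' : RatFunc K := algebraMap (Polynomial K) (RatFunc K) g with hg'
  have hg0 : g ≠ 0 := fun hz => hga (by rw [hz]; simp)
  have hg'0 : g' ≠ 0 := fun hz =>
    hg0 (IsFractionRing.injective (Polynomial K) (RatFunc K)
      (by rw [map_zero, ← hg']; exact hz))
  letI : NormalizationMonoid K := fieldNormalizationMonoid K
  letI : NormalizedGCDMonoid (Polynomial K) :=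
    UniqueFactorizationMonoid.toNormalizedGCDMonoid (Polynomial K)
  -- the mapped curve polynomial
  have hirrFm : Irreducible ((curvePoly a b m g).map (algebraMap (Polynomial K) (RatFunc K))) :=
    ((curvePoly_isPrimitive a b m g hga m' hm').irreducible_iff_irreducible_map_fraction_map).mp
      (curvePoly_irreducible a b m g hb hga m' hm' hgdeg)
  have hFm : (curvePoly a b m g).map (algebraMap (Polynomial K) (RatFunc K))
      = C ((RatFunc.X - A) ^ m) - (X ^ m + C B * X) * C g' := by
    simp only [curvePoly, Polynomial.map_sub, Polynomial.map_mul, Polynomial.map_add,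
      Polynomial.map_pow, map_X, map_C, map_sub, map_pow, RatFunc.algebraMap_X,
      RatFunc.algebraMap_C, hA, hB, hg']
  -- the shifted mapped curve polynomial
  set E : Polynomial (RatFunc K) :=
    (algEquivAevalXAddC (-A)) ((curvePoly a b m g).map (algebraMap (Polynomial K) (RatFunc K)))
    with hE
  have hEE : E = C ((RatFunc.X - A) ^ m) - ((X - C A) ^ m + C B * (X - C A)) * C g' := by
    rw [hE, hFm]
    simp only [algEquivAevalXAddC_apply, map_sub, map_mul, map_add, map_pow, aeval_X, aeval_C]
    rw [show algebraMap (RatFunc K) (Polynomial (RatFunc K)) = C from rfl]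
    rw [show (X + C (-A) : Polynomial (RatFunc K)) = X - C A by rw [C_neg]; ring]
  have hirrE : Irreducible E :=
    (MulEquiv.irreducible_iff (algEquivAevalXAddC (-A))).mpr hirrFm
  -- relation between φ and E
  have key : (C (g'⁻¹) * C g' : Polynomial (RatFunc K)) = 1 := by
    rw [← C_mul, inv_mul_cancel₀ hg'0, C_1]
  have hφeq : φ = C (-(g'⁻¹)) * E := by
    rw [hφ, hEE, div_eq_mul_inv, C_mul, map_neg]
    linear_combination (-((X - C A) ^ m + C B * (X - C A))) * key
  have hu : IsUnit (C (-(g'⁻¹)) : Polynomial (RatFunc K)) :=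
    isUnit_C.mpr (isUnit_iff_ne_zero.mpr (by simp [hg'0]))
  have hassoc : Associated E φ := by
    refine ⟨hu.unit, ?_⟩
    rw [IsUnit.unit_spec, mul_comm, ← hφeq]
  have hirrφ : Irreducible φ := hassoc.irreducible hirrE
  -- degree computation
  have hφ' : φ = (X - C A) ^ m
      + (C B * (X - C A) - C ((RatFunc.X - A) ^ m / g')) := by rw [hφ]; ring
  have hdegu : ((X - C A) ^ m : Polynomial (RatFunc K)).degree = (m : WithBot ℕ) := by
    rw [degree_pow, degree_X_sub_C, nsmul_eq_mul, mul_one]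
  have hdegv : (C B * (X - C A) - C ((RatFunc.X - A) ^ m / g')
      : Polynomial (RatFunc K)).degree < (m : WithBot ℕ) := by
    refine lt_of_le_of_lt (degree_sub_le _ _) ?_
    rw [max_lt_iff]
    constructor
    · refine lt_of_le_of_lt (degree_mul_le _ _) ?_
      refine lt_of_le_of_lt (add_le_add degree_C_le (le_of_eq (degree_X_sub_C A))) ?_
      rw [zero_add]
      exact_mod_cast (by omega : 1 < m)
    · refine lt_of_le_of_lt degree_C_le ?_
      exact_mod_cast (by omega : (0:ℕ) < m)
  have hdegφ : φ.natDegree = m := by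
    rw [hφ']
    rw [natDegree_eq_of_degree_eq_some]
    rw [degree_add_eq_left_of_degree_lt (by rw [hdegu]; exact hdegv), hdegu]
  -- conclusion
  haveI : Fact (Irreducible φ) := ⟨hirrφ⟩
  constructor
  · exact Field.toIsField (AdjoinRoot φ)
  · rw [(AdjoinRoot.powerBasis hirrφ.ne_zero).finrank, AdjoinRoot.powerBasis_dim, hdegφ]
end

section
/- Every place ν of L with ν(y − a) > 0 satisfies ν(x − a) > 0; that is, every zero of y − a in L lies above the place P_{x−a} of K(x) (the zero of x − a). -/
open Polynomial

section Aux

variable {K L : Type*} [Field K] [Field L] [Algebra (RatFunc K) L]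

lemma algMap_poly_eq_eval₂ (a : K) (g : Polynomial K) :
    algebraMap (RatFunc K) L (algebraMap (Polynomial K) (RatFunc K) g)
      = Polynomial.eval₂ ((algebraMap (RatFunc K) L).comp (RatFunc.C : K →+* RatFunc K))
        (algebraMap (RatFunc K) L (RatFunc.X - RatFunc.C a)) (g.comp (X + C a)) := by
  have h1 : (g.comp (X + C a)).comp (X - C a) = g := by
    rw [comp_assoc]; simp
  conv_lhs => rw [← h1]
  rw [eval₂_comp]
  have key : ∀ p : Polynomial K, algebraMap (RatFunc K) L (algebraMap (Polynomial K) (RatFunc K) p)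
      = Polynomial.eval₂ ((algebraMap (RatFunc K) L).comp (RatFunc.C : K →+* RatFunc K))
        (algebraMap (RatFunc K) L RatFunc.X) p := by
    intro p
    rw [← Polynomial.hom_eval₂]
    congr 1
    induction p using Polynomial.induction_on with
    | C c => simp [RatFunc.algebraMap_C]
    | add p q hp hq => simp [hp, hq]
    | monomial n c ih =>
        simp only [pow_succ, ← mul_assoc, map_mul] at *; rw [ih]; simp [RatFunc.algebraMap_X]
  rw [key]
  congr 1
  simp [eval₂_sub, key]

end Aux

/-- Every place ν of L with ν(y − a) > 0 satisfies ν(x − a) > 0. -/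
theorem zeros_of_y_sub_a_lie_over_x_sub_a
    (K : Type*) [Field K] [IsAlgClosed K] (p : ℕ) (hp : p.Prime) [CharP K p]
    (n : ℕ) (hn : 1 ≤ n) (q m : ℕ) (hq : q = p ^ n) (hm : m = q + 1)
    (a b : K) (hb : b ≠ 0)
    (g : Polynomial K) (hga : g.eval a ≠ 0) (hgdeg : g.natDegree < m)
    (hgcd : Nat.gcd (m - g.natDegree) m = 1)
    (L : Type*) [Field L] [Algebra (RatFunc K) L]
    (hdeg : Module.finrank (RatFunc K) L = m)
    (y : L) (hgen : Algebra.adjoin (RatFunc K) {y} = ⊤)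
    (heq : (y - algebraMap (RatFunc K) L (RatFunc.C a)) ^ m
        + algebraMap (RatFunc K) L (RatFunc.C b) * (y - algebraMap (RatFunc K) L (RatFunc.C a))
        = algebraMap (RatFunc K) L
            ((RatFunc.X - RatFunc.C a) ^ m / algebraMap (Polynomial K) (RatFunc K) g))
    (ν : AddValuation L (WithTop ℤ)) (hsurj : Function.Surjective ν)
    (htriv : ∀ c : K, c ≠ 0 → ν (algebraMap (RatFunc K) L (RatFunc.C c)) = 0)
    (hy : 0 < ν (y - algebraMap (RatFunc K) L (RatFunc.C a))) :
    0 < ν (algebraMap (RatFunc K) L (RatFunc.X - RatFunc.C a)) := by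
  classical
  set A := algebraMap (RatFunc K) L with hA
  set φ : K →+* L := (algebraMap (RatFunc K) L).comp (RatFunc.C : K →+* RatFunc K) with hφ
  set X' : L := A (RatFunc.X - RatFunc.C a) with hX'
  set u : L := y - A (RatFunc.C a) with hu
  set G : L := A (algebraMap (Polynomial K) (RatFunc K) g) with hG
  -- basic nonvanishing facts
  have hAinj : Function.Injective A := (algebraMap (RatFunc K) L).injective
  have hgne : g ≠ 0 := fun h => hga (by simp [h])
  have hXCa : (RatFunc.X - RatFunc.C a : RatFunc K) ≠ 0 := by
    have h2 : (algebraMap (Polynomial K) (RatFunc K)) (X - C a) ≠ 0 := fun h0 =>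
      X_sub_C_ne_zero a
        (IsFractionRing.injective (Polynomial K) (RatFunc K) (h0.trans (map_zero _).symm))
    have h3 : (RatFunc.X - RatFunc.C a : RatFunc K)
        = algebraMap (Polynomial K) (RatFunc K) (X - C a) := by
      rw [map_sub, RatFunc.algebraMap_X, RatFunc.algebraMap_C]
    rw [h3]; exact h2
  have hX'ne : X' ≠ 0 := fun h0 => hXCa (hAinj (by rw [map_zero]; exact h0))
  have hGne : G ≠ 0 := by
    intro h0
    exact hgne (IsFractionRing.injective (Polynomial K) (RatFunc K)
      ((hAinj (by rw [map_zero]; exact h0)).trans (map_zero _).symm))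
  have htrivφ : ∀ c : K, c ≠ 0 → ν (φ c) = 0 := fun c hc => htriv c hc
  -- the main multiplicative identity:  X'^m = (u^m + B u) * G
  have hmain : X' ^ m = (u ^ m + A (RatFunc.C b) * u) * G := by
    rw [heq, map_div₀, hG, hX', ← map_pow]
    field_simp
    exact (mul_div_cancel_right₀ _ hGne).symm
  -- valuation of the RHS factor is positive
  have hνφ : ∀ c : K, (0 : WithTop ℤ) ≤ ν (φ c) := by
    intro c
    by_cases hc : c = 0
    · simp [hφ, hc]
    · exact le_of_eq (htriv c hc).symm
  have hRHSpos : 0 < ν (u ^ m + A (RatFunc.C b) * u) := by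
    apply ν.map_lt_add
    · rw [ν.map_pow]
      exact nsmul_pos hy (by omega)
    · rw [ν.map_mul, htriv b hb, zero_add]
      exact hy
  -- valuation equation
  have hveq : m • ν X' = ν (u ^ m + A (RatFunc.C b) * u) + ν G := by
    rw [← ν.map_pow, ← ν.map_mul, hmain]
  -- suppose for contradiction ν X' ≤ 0
  by_contra hcon
  push_neg at hcon
  have htne : ν X' ≠ ⊤ := (ν.ne_top_iff).mpr hX'ne
  obtain ⟨t₀, ht₀⟩ := WithTop.ne_top_iff_exists.mp htne
  have ht₀le : t₀ ≤ 0 := by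
    rw [← WithTop.coe_le_coe]
    rw [ht₀]
    exact_mod_cast hcon
  -- express G as an eval₂ sum in X'
  set h : Polynomial K := g.comp (X + C a) with hh
  set d : ℕ := g.natDegree with hd
  have hhd : h.natDegree = d := by
    rw [hh, natDegree_comp]; simp [hd]
  have hhne : h ≠ 0 := by
    intro h0
    apply hga
    have : h.comp (X - C a) = g := by rw [hh, comp_assoc]; simp
    rw [← this, h0]
    simp
  have hcoeffd : h.coeff d ≠ 0 := by
    rw [← hhd]
    exact leadingCoeff_ne_zero.mpr hhne
  have hGsum : G = ∑ i ∈ Finset.range (d + 1), φ (h.coeff i) * X' ^ i := by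
    rw [hG, algMap_poly_eq_eval₂ a g, ← hh, ← hφ, ← hX']
    rw [eval₂_eq_sum_range' _ (by omega : h.natDegree < d + 1)]
  -- smul cast helper
  have hsmul : ∀ k : ℕ, k • ν X' = ((k * t₀ : ℤ) : WithTop ℤ) := by
    intro k
    rw [← ht₀, ← WithTop.coe_nsmul]
    norm_num [smul_eq_mul]
  rcases lt_or_eq_of_le ht₀le with ht₀lt | ht₀eq
  · -- case ν X' < 0 : ν G = d • ν X'
    have hterm_d : ν (φ (h.coeff d) * X' ^ d) = ((d * t₀ : ℤ) : WithTop ℤ) := by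
      rw [ν.map_mul, htrivφ _ hcoeffd, zero_add, ν.map_pow, hsmul]
    have htail : ((d * t₀ : ℤ) : WithTop ℤ)
        < ν (∑ i ∈ Finset.range d, φ (h.coeff i) * X' ^ i) := by
      apply ν.map_lt_sum (WithTop.coe_ne_top)
      intro i hi
      have hi' : i < d := Finset.mem_range.mp hi
      calc ((d * t₀ : ℤ) : WithTop ℤ) < ((i * t₀ : ℤ) : WithTop ℤ) := by
            rw [WithTop.coe_lt_coe]
            apply mul_lt_mul_of_neg_right _ ht₀lt
            exact_mod_cast hi'
        _ = ν (X' ^ i) := by rw [ν.map_pow, hsmul]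
        _ ≤ ν (φ (h.coeff i)) + ν (X' ^ i) := le_add_of_nonneg_left (hνφ _)
        _ = ν (φ (h.coeff i) * X' ^ i) := (ν.map_mul _ _).symm
    have hνG : ν G = ((d * t₀ : ℤ) : WithTop ℤ) := by
      rw [hGsum, Finset.sum_range_succ, ν.map_add_eq_of_lt_right, hterm_d]
      rw [hterm_d]
      exact htail
    -- extract the value of ν RHS
    have hfin : ν (u ^ m + A (RatFunc.C b) * u) ≠ ⊤ := by
      intro htop
      rw [htop, hsmul, top_add] at hveq
      exact WithTop.coe_ne_top hveq
    obtain ⟨r, hr⟩ := WithTop.ne_top_iff_exists.mp hfin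
    have : (m : ℤ) * t₀ = r + d * t₀ := by
      have := hveq
      rw [hsmul, ← hr, hνG, ← WithTop.coe_add, WithTop.coe_inj] at this
      exact this
    have hrval : r = ((m : ℤ) - d) * t₀ := by linarith
    have hrpos : 0 < r := by
      rw [← WithTop.coe_lt_coe, hr]
      exact_mod_cast hRHSpos
    have : ((m : ℤ) - d) * t₀ < 0 := by
      apply mul_neg_of_pos_of_neg _ ht₀lt
      have : (d : ℤ) < m := by exact_mod_cast hgdeg
      linarith
    omega
  · -- case ν X' = 0
    have ht0 : ν X' = 0 := by rw [← ht₀, ht₀eq]; rfl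
    have hνG : (0 : WithTop ℤ) ≤ ν G := by
      rw [hGsum]
      apply ν.map_le_sum
      intro i _
      rw [ν.map_mul, ν.map_pow, ht0, smul_zero, add_zero]
      exact hνφ _
    have : (0 : WithTop ℤ) < m • ν X' := by
      rw [hveq]
      exact lt_add_of_lt_of_nonneg hRHSpos hνG
    rw [ht0, smul_zero] at this
    exact lt_irrefl _ this
end

section
/- Every place ν of L with ν((y − a)^{q} + b) > 0 satisfies ν(x − a) > 0 and ν(y − a) = 0; that is, every zero of (y − a)^{q} + b in L lies above the place P_{x−a} of K(x) and is not a zero of y − a. -/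
open Polynomial

private lemma addval_multiset_prod {L : Type*} [Field L] (ν : AddValuation L (WithTop ℤ))
    (s : Multiset L) : ν s.prod = (s.map (fun z => ν z)).sum := by
  induction s using Multiset.induction with
  | empty => simp
  | cons a s ih => simp [ν.map_mul, ih]

private lemma coe_nsmul_withtop (q : ℕ) (t : ℤ) :
    (q • (t : WithTop ℤ)) = ((q • t : ℤ) : WithTop ℤ) := by
  induction q with
  | zero => simp
  | succ k ih => rw [succ_nsmul, succ_nsmul, ih]; push_cast; ring

private lemma addval_Y_eq_zero (q : ℕ) (hq : 1 ≤ q) {L : Type*} [Field L]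
    (ν : AddValuation L (WithTop ℤ))
    (Y B : L) (hB : ν B = 0) (hQ' : 0 < ν (Y ^ q + B)) : ν Y = 0 := by
  rcases lt_trichotomy (ν Y) 0 with h | h | h
  · exfalso
    obtain ⟨t, ht⟩ : ∃ t : ℤ, ν Y = t := by
      cases hvy : ν Y with
      | top => rw [hvy] at h; exact absurd h (by simp)
      | coe t => exact ⟨t, rfl⟩
    have htneg : t < 0 := by rw [ht] at h; exact_mod_cast h
    have hpow : ν (Y ^ q) = ((q • t : ℤ) : WithTop ℤ) := by
      rw [ν.map_pow, ht, coe_nsmul_withtop]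
    have hqt : (q • t : ℤ) < 0 := by
      have h1 : (1 : ℤ) ≤ (q : ℤ) := by exact_mod_cast hq
      have h2 : q • t = (q : ℤ) * t := nsmul_eq_mul q t
      nlinarith
    have hqt' : ((q • t : ℤ) : WithTop ℤ) < 0 := by exact_mod_cast hqt
    have hlt : ν (Y ^ q) < ν B := by rw [hpow, hB]; exact hqt'
    have := ν.map_add_eq_of_lt_left hlt
    rw [this, hpow] at hQ'
    exact absurd hQ' (not_lt.2 hqt'.le)
  · exact h
  · exfalso
    have hpow : ν B < ν (Y ^ q) := by
      rw [hB, ν.map_pow]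
      exact nsmul_pos h (by omega)
    have := ν.map_add_eq_of_lt_right hpow
    rw [this, hB] at hQ'
    exact lt_irrefl _ hQ'

/-- Every place ν of L with ν((y − a)^q + b) > 0 satisfies ν(x − a) > 0
and ν(y − a) = 0. -/
theorem zeros_of_ya_pow_q_add_b_lie_over_x_sub_a
    (K : Type*) [Field K] [IsAlgClosed K] (p : ℕ) (hp : p.Prime) [CharP K p]
    (n : ℕ) (hn : 1 ≤ n) (q m : ℕ) (hq : q = p ^ n) (hm : m = q + 1)
    (a b : K) (hb : b ≠ 0)
    (g : Polynomial K) (hga : g.eval a ≠ 0) (hgdeg : g.natDegree < m)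
    (hgcd : Nat.gcd (m - g.natDegree) m = 1)
    (L : Type*) [Field L] [Algebra (RatFunc K) L]
    (hdeg : Module.finrank (RatFunc K) L = m)
    (y : L) (hgen : Algebra.adjoin (RatFunc K) {y} = ⊤)
    (heq : (y - algebraMap (RatFunc K) L (RatFunc.C a)) ^ m
        + algebraMap (RatFunc K) L (RatFunc.C b) * (y - algebraMap (RatFunc K) L (RatFunc.C a))
        = algebraMap (RatFunc K) L
            ((RatFunc.X - RatFunc.C a) ^ m / algebraMap (Polynomial K) (RatFunc K) g))
    (ν : AddValuation L (WithTop ℤ)) (hsurj : Function.Surjective ν)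
    (htriv : ∀ c : K, c ≠ 0 → ν (algebraMap (RatFunc K) L (RatFunc.C c)) = 0)
    (hQ' : 0 < ν ((y - algebraMap (RatFunc K) L (RatFunc.C a)) ^ q
        + algebraMap (RatFunc K) L (RatFunc.C b))) :
    0 < ν (algebraMap (RatFunc K) L (RatFunc.X - RatFunc.C a)) ∧
      ν (y - algebraMap (RatFunc K) L (RatFunc.C a)) = 0 := by
  set A := algebraMap (RatFunc K) L with hA
  set Y := y - A (RatFunc.C a) with hYdef
  set xa := A (RatFunc.X - RatFunc.C a) with hxadef
  have hq1 : 1 ≤ q := hq ▸ Nat.one_le_pow _ _ hp.pos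
  have hB : ν (A (RatFunc.C b)) = 0 := htriv b hb
  -- ν Y = 0
  have hY0 : ν Y = 0 := addval_Y_eq_zero q hq1 ν Y (A (RatFunc.C b)) hB hQ'
  -- RHS has positive valuation
  have hfac : Y ^ m + A (RatFunc.C b) * Y = Y * (Y ^ q + A (RatFunc.C b)) := by
    rw [hm]; ring
  have hRpos : 0 < ν (A ((RatFunc.X - RatFunc.C a) ^ m
      / algebraMap (Polynomial K) (RatFunc K) g)) := by
    rw [← heq, hfac, ν.map_mul, hY0, zero_add]
    exact hQ'
  -- set up the image of g
  set G := A (algebraMap (Polynomial K) (RatFunc K) g) with hGdef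
  have hg0 : g ≠ 0 := fun h => hga (by simp [h])
  have hGrat : algebraMap (Polynomial K) (RatFunc K) g ≠ 0 := by
    simpa using (RatFunc.algebraMap_ne_zero hg0)
  have hG0 : G ≠ 0 := by
    rw [hGdef]
    exact (map_ne_zero A).mpr hGrat
  -- key valuation identity: ν(RHS) + ν G = m • ν xa
  have hRHS : A ((RatFunc.X - RatFunc.C a) ^ m / algebraMap (Polynomial K) (RatFunc K) g)
      = xa ^ m / G := by
    rw [map_div₀, map_pow]
  have hkey : ν (A ((RatFunc.X - RatFunc.C a) ^ m
      / algebraMap (Polynomial K) (RatFunc K) g)) + ν G = m • ν xa := by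
    rw [← ν.map_mul, hRHS, div_mul_cancel₀ _ hG0, ν.map_pow]
  -- factor g over the algebraically closed field
  have hsplit : Splits g := IsAlgClosed.splits g
  have hfactor := hsplit.eq_prod_roots
  have hcard : g.roots.card = g.natDegree := splits_iff_card_roots.mp hsplit
  set ψ := A.comp (algebraMap (Polynomial K) (RatFunc K)) with hψ
  have hψC : ∀ c : K, ψ (Polynomial.C c) = A (RatFunc.C c) := by
    intro c
    simp [hψ, RatFunc.algebraMap_C]
  have hψfac : ∀ r : K, ψ (Polynomial.X - Polynomial.C r) = xa + A (RatFunc.C (a - r)) := by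
    intro r
    have : (RatFunc.X - RatFunc.C a) + RatFunc.C (a - r) = RatFunc.X - RatFunc.C r := by
      rw [map_sub]; ring
    rw [hxadef, ← map_add, this]
    simp [hψ, RatFunc.algebraMap_X, RatFunc.algebraMap_C]
  have hroot_ne : ∀ r ∈ g.roots, r ≠ a := by
    intro r hr hra
    exact hga (hra ▸ (isRoot_of_mem_roots hr))
  -- ν G in terms of the roots
  have hGfact : G = ψ (Polynomial.C g.leadingCoeff)
      * (g.roots.map (fun r => ψ (Polynomial.X - Polynomial.C r))).prod := by
    rw [hGdef]
    show ψ g = _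
    conv_lhs => rw [hfactor]
    rw [map_mul, map_multiset_prod, Multiset.map_map]
    rfl
  have hlc : ν (ψ (Polynomial.C g.leadingCoeff)) = 0 := by
    rw [hψC]
    exact htriv _ (leadingCoeff_ne_zero.mpr hg0)
  have hνG : ν G = (g.roots.map (fun r => ν (xa + A (RatFunc.C (a - r))))).sum := by
    rw [hGfact, ν.map_mul, hlc, zero_add, addval_multiset_prod, Multiset.map_map]
    congr 1
    exact Multiset.map_congr rfl (fun r _ => by rw [Function.comp_apply, hψfac r])
  -- main goal: 0 < ν xa
  have hxapos : 0 < ν xa := by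
    by_contra hcon
    push_neg at hcon
    rcases lt_or_eq_of_le hcon with hlt | heq0
    · -- ν xa < 0
      obtain ⟨t, ht⟩ : ∃ t : ℤ, ν xa = t := by
        cases hvx : ν xa with
        | top => rw [hvx] at hlt; exact absurd hlt (by simp)
        | coe t => exact ⟨t, rfl⟩
      have htneg : t < 0 := by rw [ht] at hlt; exact_mod_cast hlt
      have heach : ∀ r ∈ g.roots, ν (xa + A (RatFunc.C (a - r))) = ν xa := by
        intro r hr
        apply ν.map_add_eq_of_lt_left
        rw [htriv _ (sub_ne_zero.mpr (Ne.symm (hroot_ne r hr))), ht]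
        exact_mod_cast htneg
      have hνG' : ν G = ((g.natDegree • t : ℤ) : WithTop ℤ) := by
        rw [hνG, Multiset.map_congr rfl (fun r hr => by rw [heach r hr, ht]),
          Multiset.map_const', Multiset.sum_replicate, hcard, coe_nsmul_withtop]
      have hmν : (m : ℕ) • ν xa = ((m • t : ℤ) : WithTop ℤ) := by
        rw [ht, coe_nsmul_withtop]
      have heqn := hkey
      rw [hνG', hmν] at heqn
      have hsum : ((m • t - g.natDegree • t : ℤ) : WithTop ℤ)
          + ((g.natDegree • t : ℤ) : WithTop ℤ) = ((m • t : ℤ) : WithTop ℤ) := by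
        rw [← WithTop.coe_add, sub_add_cancel]
      have hcancel : ν (A ((RatFunc.X - RatFunc.C a) ^ m
          / algebraMap (Polynomial K) (RatFunc K) g)) = ((m • t - g.natDegree • t : ℤ) : WithTop ℤ) :=
        WithTop.add_right_cancel WithTop.coe_ne_top (heqn.trans hsum.symm)
      rw [hcancel] at hRpos
      have : (m • t - g.natDegree • t : ℤ) < 0 := by
        have h1 : m • t = (m : ℤ) * t := nsmul_eq_mul m t
        have h2 : g.natDegree • t = (g.natDegree : ℤ) * t := nsmul_eq_mul g.natDegree t
        have h3 : (g.natDegree : ℤ) < (m : ℤ) := by exact_mod_cast hgdeg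
        nlinarith
      exact absurd hRpos (not_lt.2 (le_of_lt (by exact_mod_cast this)))
    · -- ν xa = 0
      have hGnonneg : 0 ≤ ν G := by
        rw [hνG]
        apply Multiset.sum_nonneg
        intro z hz
        obtain ⟨r, hr, rfl⟩ := Multiset.mem_map.mp hz
        have h1 : (0 : WithTop ℤ) ≤ min (ν xa) (ν (A (RatFunc.C (a - r)))) := by
          rw [heq0, htriv _ (sub_ne_zero.mpr (Ne.symm (hroot_ne r hr)))]
          simp
        exact h1.trans (ν.map_add _ _)
      have heqn := hkey
      rw [heq0, smul_zero] at heqn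
      have : (0 : WithTop ℤ) < ν (A ((RatFunc.X - RatFunc.C a) ^ m
          / algebraMap (Polynomial K) (RatFunc K) g)) + ν G :=
        lt_of_lt_of_le hRpos (le_add_of_nonneg_right hGnonneg)
      rw [heqn] at this
      exact lt_irrefl _ this
  exact ⟨hxapos, hY0⟩
end

section
/- If ν is a place of L with ν((y − a)^{q} + b) > 0, then ν(x − a) = q; in other words, the place Q' of L given by a zero of (y − a)^{q} + b has ramification index q over the place P_{x−a} of K(x), so P_{x−a} is wildly ramified at Q' in L/K(x). -/
open Polynomial

/-- helper: nsmul of an integer coerced into `WithTop ℤ`. -/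
lemma wt_nsmul_coe (n : ℕ) (k : ℤ) :
    n • ((k : ℤ) : WithTop ℤ) = (((n : ℤ) * k : ℤ) : WithTop ℤ) := by
  induction n with
  | zero => simp
  | succ n ih =>
    rw [succ_nsmul, ih, ← WithTop.coe_add]
    congr 1
    push_cast
    ring

/-- helper: valuation of a finite sum having a unique strict minimum term. -/
lemma val_sum_eq {L : Type*} [Field L] (ν : AddValuation L (WithTop ℤ)) {ι : Type*}
    (s : Finset ι) (f : ι → L) (i₀ : ι) (hi₀ : i₀ ∈ s) (hne : ν (f i₀) ≠ ⊤)
    (h : ∀ j ∈ s, j ≠ i₀ → ν (f i₀) < ν (f j)) :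
    ν (∑ j ∈ s, f j) = ν (f i₀) := by
  classical
  rw [← Finset.add_sum_erase s f hi₀]
  have hlt : ν (f i₀) < ν (∑ j ∈ s.erase i₀, f j) :=
    ν.map_lt_sum hne (fun j hj =>
      h j (Finset.mem_of_mem_erase hj) (Finset.ne_of_mem_erase hj))
  exact ν.map_add_eq_of_lt_left hlt

/-- If ν((y − a)^q + b) > 0 then ν(x − a) = q: the ramification index of
the place Q' over P_{x−a} equals q, so P_{x−a} is wildly ramified in L/K(x). -/
theorem wild_ramification_at_Q'
    (K : Type*) [Field K] [IsAlgClosed K] (p : ℕ) (hp : p.Prime) [CharP K p]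
    (n : ℕ) (hn : 1 ≤ n) (q m : ℕ) (hq : q = p ^ n) (hm : m = q + 1)
    (a b : K) (hb : b ≠ 0)
    (g : Polynomial K) (hga : g.eval a ≠ 0) (hgdeg : g.natDegree < m)
    (hgcd : Nat.gcd (m - g.natDegree) m = 1)
    (L : Type*) [Field L] [Algebra (RatFunc K) L]
    (hdeg : Module.finrank (RatFunc K) L = m)
    (y : L) (hgen : Algebra.adjoin (RatFunc K) {y} = ⊤)
    (heq : (y - algebraMap (RatFunc K) L (RatFunc.C a)) ^ m
        + algebraMap (RatFunc K) L (RatFunc.C b) * (y - algebraMap (RatFunc K) L (RatFunc.C a))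
        = algebraMap (RatFunc K) L
            ((RatFunc.X - RatFunc.C a) ^ m / algebraMap (Polynomial K) (RatFunc K) g))
    (ν : AddValuation L (WithTop ℤ)) (hsurj : Function.Surjective ν)
    (htriv : ∀ c : K, c ≠ 0 → ν (algebraMap (RatFunc K) L (RatFunc.C c)) = 0)
    (hQ' : 0 < ν ((y - algebraMap (RatFunc K) L (RatFunc.C a)) ^ q
        + algebraMap (RatFunc K) L (RatFunc.C b))) :
    ν (algebraMap (RatFunc K) L (RatFunc.X - RatFunc.C a)) = ((q : ℤ) : WithTop ℤ) := by
  classical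
  haveI : Fact p.Prime := ⟨hp⟩
  have hq2 : 2 ≤ q := by
    rw [hq]
    calc 2 ≤ p := hp.two_le
    _ ≤ p ^ n := Nat.le_self_pow (by omega) p
  have hq0 : 0 < q := by omega
  set Φ : Polynomial K →+* L :=
    ((algebraMap (RatFunc K) L).comp (algebraMap (Polynomial K) (RatFunc K))) with hΦdef
  have hΦap : ∀ u : Polynomial K,
      Φ u = algebraMap (RatFunc K) L (algebraMap (Polynomial K) (RatFunc K) u) :=
    fun u => rfl
  have hΦinj : Function.Injective Φ :=
    (algebraMap (RatFunc K) L).injective.comp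
      (IsFractionRing.injective (Polynomial K) (RatFunc K))
  have hΦC : ∀ c : K, Φ (Polynomial.C c) = algebraMap (RatFunc K) L (RatFunc.C c) := by
    intro c; rw [hΦap, RatFunc.algebraMap_C]
  have hΦX : Φ Polynomial.X = algebraMap (RatFunc K) L RatFunc.X := by
    rw [hΦap, RatFunc.algebraMap_X]
  have hC0 : ∀ c : K, c ≠ 0 → ν (Φ (Polynomial.C c)) = 0 := fun c hc => by
    rw [hΦC]; exact htriv c hc
  have hCnonneg : ∀ c : K, 0 ≤ ν (Φ (Polynomial.C c)) := by
    intro c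
    by_cases hc : c = 0
    · simp [hc]
    · rw [hC0 c hc]
  set z := y - algebraMap (RatFunc K) L (RatFunc.C a) with hzdef
  set A := algebraMap (RatFunc K) L (RatFunc.X - RatFunc.C a) with hAdef
  set w := z ^ q + algebraMap (RatFunc K) L (RatFunc.C b) with hwdef
  have hAΦ : A = Φ (Polynomial.X - Polynomial.C a) := by
    rw [map_sub, hΦC, hΦX, hAdef, map_sub]
  have hA_ne : A ≠ 0 := by
    rw [hAΦ]
    intro h
    exact Polynomial.X_sub_C_ne_zero a (hΦinj (by rw [h, map_zero]))
  have hg0 : g ≠ 0 := fun h => hga (by simp [h])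
  have hG_ne : Φ g ≠ 0 := fun h => hg0 (hΦinj (by rw [h, map_zero]))
  have hprod : w * z * Φ g = A ^ m := by
    have h2 : algebraMap (RatFunc K) L
        ((RatFunc.X - RatFunc.C a) ^ m / algebraMap (Polynomial K) (RatFunc K) g)
        = A ^ m / Φ g := by
      rw [map_div₀, map_pow, ← hAdef, ← hΦap]
    have h3 : z ^ m + algebraMap (RatFunc K) L (RatFunc.C b) * z = w * z := by
      rw [hwdef, hm, pow_succ]; ring
    have h1 : w * z = A ^ m / Φ g := by rw [← h3, heq, h2]
    rw [eq_div_iff hG_ne] at h1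
    exact h1
  have hAm_ne : A ^ m ≠ 0 := pow_ne_zero m hA_ne
  have hw_ne : w ≠ 0 := by
    intro h; apply hAm_ne; rw [← hprod, h]; ring
  have hz_ne : z ≠ 0 := by
    intro h; apply hAm_ne; rw [← hprod, h]; ring
  have hb' : ν (algebraMap (RatFunc K) L (RatFunc.C b)) = 0 := htriv b hb
  have hνz : ν z = 0 := by
    have h1 : z ^ q = w - algebraMap (RatFunc K) L (RatFunc.C b) := by
      rw [hwdef]; ring
    have h2 : ν (z ^ q) = 0 := by
      rw [h1, ν.map_sub_eq_of_lt_right (by rw [hb']; exact hQ'), hb']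
    obtain ⟨k, hk⟩ := WithTop.ne_top_iff_exists.mp (ν.ne_top_iff.mpr hz_ne)
    rw [ν.map_pow, ← hk, wt_nsmul_coe] at h2
    have h3 : (q : ℤ) * k = 0 := by exact_mod_cast h2
    have hqz : (q : ℤ) ≠ 0 := by exact_mod_cast hq0.ne'
    have hk0 : k = 0 := (mul_eq_zero.mp h3).resolve_left hqz
    rw [← hk, hk0]; rfl
  obtain ⟨α, hα⟩ := WithTop.ne_top_iff_exists.mp (ν.ne_top_iff.mpr hA_ne)
  obtain ⟨ω, hω⟩ := WithTop.ne_top_iff_exists.mp (ν.ne_top_iff.mpr hw_ne)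
  obtain ⟨γ, hγ⟩ := WithTop.ne_top_iff_exists.mp (ν.ne_top_iff.mpr hG_ne)
  have hω_pos : 0 < ω := by
    have h := hQ'
    rw [← hω] at h
    exact_mod_cast h
  have hkey : ω + γ = (m : ℤ) * α := by
    have h := congrArg ν hprod
    rw [ν.map_mul, ν.map_mul, hνz, ν.map_pow, ← hα, ← hω, ← hγ, wt_nsmul_coe, add_zero] at h
    exact_mod_cast h
  have hCa := hCnonneg a
  have hxA : Φ Polynomial.X = A + Φ (Polynomial.C a) := by
    rw [hAΦ, map_sub]; ring
  have hα_pos : 0 < α := by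
    rcases lt_trichotomy α 0 with hneg | hzero | hpos
    · exfalso
      have hxval : ν (Φ Polynomial.X) = (α : WithTop ℤ) := by
        rw [hxA, ν.map_add_eq_of_lt_left, hα]
        rw [← hα]
        exact lt_of_lt_of_le (by exact_mod_cast hneg) hCa
      have hbound : ∀ (N : ℕ) (f : Polynomial K), f.natDegree ≤ N →
          (((N : ℤ) * α : ℤ) : WithTop ℤ) ≤ ν (Φ f) := by
        intro N f hdf
        have hrepr := Polynomial.as_sum_range' f (f.natDegree + 1) (Nat.lt_succ_self _)
        rw [hrepr, map_sum]
        apply ν.map_le_sum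
        intro i hi
        by_cases hc : f.coeff i = 0
        · simp [hc]
        · rw [← Polynomial.C_mul_X_pow_eq_monomial, map_mul, map_pow, ν.map_mul, ν.map_pow,
            hC0 _ hc, hxval, wt_nsmul_coe, zero_add]
          have hiN : (i : ℤ) ≤ (N : ℤ) := by
            have h1 : i ≤ N := le_trans (Nat.lt_succ_iff.mp (Finset.mem_range.mp hi)) hdf
            exact_mod_cast h1
          exact_mod_cast mul_le_mul_of_nonpos_right hiN (le_of_lt hneg)
      have hγval : ν (Φ g) = (((g.natDegree : ℤ) * α : ℤ) : WithTop ℤ) := by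
        by_cases hd0 : g.natDegree = 0
        · obtain ⟨c, hc⟩ := Polynomial.natDegree_eq_zero.mp hd0
          have hcne : c ≠ 0 := by
            intro h; apply hg0; rw [← hc, h, map_zero]
          rw [← hc, hC0 c hcne]
          simp [Polynomial.natDegree_C]
        · have hg_repr := g.eraseLead_add_C_mul_X_pow
          have hlead : ν (Φ (Polynomial.C g.leadingCoeff * Polynomial.X ^ g.natDegree))
              = (((g.natDegree : ℤ) * α : ℤ) : WithTop ℤ) := by
            rw [map_mul, map_pow, ν.map_mul, ν.map_pow,
              hC0 _ (Polynomial.leadingCoeff_ne_zero.mpr hg0), hxval, wt_nsmul_coe, zero_add]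
          have herase : (((g.natDegree : ℤ) * α : ℤ) : WithTop ℤ) < ν (Φ g.eraseLead) := by
            refine lt_of_lt_of_le ?_ (hbound (g.natDegree - 1) _ (g.eraseLead_natDegree_le))
            have h1 : ((g.natDegree - 1 : ℕ) : ℤ) = (g.natDegree : ℤ) - 1 := by
              omega
            rw [h1]
            have : (g.natDegree : ℤ) * α < ((g.natDegree : ℤ) - 1) * α := by nlinarith
            exact_mod_cast this
          conv_lhs => rw [← hg_repr]
          rw [map_add, ν.map_add_eq_of_lt_right (by rw [hlead]; exact herase), hlead]
      have hγd : γ = (g.natDegree : ℤ) * α := by exact_mod_cast hγ.trans hγval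
      have hdm : (g.natDegree : ℤ) < (m : ℤ) := by exact_mod_cast hgdeg
      nlinarith [mul_pos (sub_pos.mpr hdm) (neg_pos.mpr hneg)]
    · exfalso
      have hx_nonneg : 0 ≤ ν (Φ Polynomial.X) := by
        rw [hxA]
        refine ν.map_le_add ?_ hCa
        rw [← hα, hzero]
        exact le_refl _
      have hpoly : ∀ f : Polynomial K, 0 ≤ ν (Φ f) := by
        intro f
        induction f using Polynomial.induction_on' with
        | add r s hr hs => rw [map_add]; exact ν.map_le_add hr hs
        | monomial i c =>
          rw [← Polynomial.C_mul_X_pow_eq_monomial, map_mul, map_pow, ν.map_mul, ν.map_pow]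
          exact add_nonneg (hCnonneg c) (nsmul_nonneg hx_nonneg i)
      have hγ_nonneg : 0 ≤ γ := by
        have h := hpoly g
        rw [← hγ] at h
        exact_mod_cast h
      rw [hzero, mul_zero] at hkey
      linarith
    · exact hpos
  -- now α > 0
  have hα_nonneg : (0 : WithTop ℤ) ≤ ν A := by
    rw [← hα]; exact_mod_cast hα_pos.le
  have hx_nonneg : 0 ≤ ν (Φ Polynomial.X) := by
    rw [hxA]
    exact ν.map_le_add hα_nonneg hCa
  have hpoly : ∀ f : Polynomial K, 0 ≤ ν (Φ f) := by
    intro f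
    induction f using Polynomial.induction_on' with
    | add r s hr hs => rw [map_add]; exact ν.map_le_add hr hs
    | monomial i c =>
      rw [← Polynomial.C_mul_X_pow_eq_monomial, map_mul, map_pow, ν.map_mul, ν.map_pow]
      exact add_nonneg (hCnonneg c) (nsmul_nonneg hx_nonneg i)
  have hval0 : ∀ f : Polynomial K, f.eval a ≠ 0 → ν (Φ f) = 0 := by
    intro f hf
    obtain ⟨h, hh⟩ := Polynomial.X_sub_C_dvd_sub_C_eval (a := a) (p := f)
    have hfrepr : f = Polynomial.C (f.eval a) + (Polynomial.X - Polynomial.C a) * h := by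
      rw [← hh]; ring
    rw [hfrepr, map_add, ν.map_add_eq_of_lt_left, hC0 _ hf]
    rw [hC0 _ hf, map_mul, ν.map_mul, ← hAΦ]
    calc (0 : WithTop ℤ) < ν A := by rw [← hα]; exact_mod_cast hα_pos
    _ = ν A + 0 := (add_zero _).symm
    _ ≤ ν A + ν (Φ h) := add_le_add le_rfl (hpoly h)
  have hγ0 : γ = 0 := by
    have h := hval0 g hga
    rw [← hγ] at h
    exact_mod_cast h
  have hωmα : ω = (m : ℤ) * α := by rw [hγ0, add_zero] at hkey; exact hkey
  -- Frobenius
  obtain ⟨β, hβ⟩ := IsAlgClosed.exists_pow_nat_eq b (n := q) hq0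
  haveI : CharP L p :=
    charP_of_injective_ringHom (Φ.comp (Polynomial.C : K →+* Polynomial K)).injective p
  set s := z + Φ (Polynomial.C β) with hsdef
  have hsq : s ^ q = w := by
    have h1 : (Φ (Polynomial.C β)) ^ q = algebraMap (RatFunc K) L (RatFunc.C b) := by
      rw [← map_pow, ← map_pow, hβ, hΦC]
    rw [hsdef, hq, add_pow_char_pow, ← hq, h1, hwdef]
  have hs_ne : s ≠ 0 := fun h => hw_ne (by rw [← hsq, h, zero_pow hq0.ne'])
  obtain ⟨σ, hσ⟩ := WithTop.ne_top_iff_exists.mp (ν.ne_top_iff.mpr hs_ne)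
  have hqσ : (q : ℤ) * σ = (m : ℤ) * α := by
    have h := congrArg ν hsq
    rw [ν.map_pow, ← hσ, wt_nsmul_coe, ← hω] at h
    have h2 : (q : ℤ) * σ = ω := by exact_mod_cast h
    rw [h2, hωmα]
  have hm' : (m : ℤ) = (q : ℤ) + 1 := by exact_mod_cast hm
  set t : ℤ := σ - α with htdef
  have hαqt : α = (q : ℤ) * t := by
    have h3 : (q : ℤ) * σ = (q : ℤ) * α + α := by rw [hqσ, hm']; ring
    rw [htdef, mul_sub]
    linarith
  have hq0' : (0 : ℤ) < (q : ℤ) := by exact_mod_cast hq0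
  have ht_pos : 0 < t := by
    by_contra hcon
    push_neg at hcon
    have := mul_nonpos_of_nonneg_of_nonpos hq0'.le hcon
    rw [← hαqt] at this
    linarith
  -- value group of the restriction to RatFunc K
  have hpolyk : ∀ (N : ℕ) (f : Polynomial K), f.natDegree ≤ N → f ≠ 0 →
      ∃ k : ℤ, ν (Φ f) = ((α * k : ℤ) : WithTop ℤ) := by
    intro N
    induction N with
    | zero =>
      intro f hdf hf0
      refine ⟨0, ?_⟩
      have hev : f.eval a ≠ 0 := by
        obtain ⟨c, hc⟩ := Polynomial.natDegree_eq_zero.mp (Nat.le_zero.mp hdf)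
        rw [← hc, Polynomial.eval_C]
        intro h
        exact hf0 (by rw [← hc, h, map_zero])
      rw [hval0 f hev]; simp
    | succ N ih =>
      intro f hdf hf0
      by_cases hfa : f.eval a = 0
      · obtain ⟨h, hh⟩ := Polynomial.dvd_iff_isRoot.mpr hfa
        have hh_ne : h ≠ 0 := by rintro rfl; rw [mul_zero] at hh; exact hf0 hh
        have hdh : h.natDegree ≤ N := by
          have h1 : f.natDegree = h.natDegree + 1 := by
            rw [hh, Polynomial.natDegree_mul (Polynomial.X_sub_C_ne_zero a) hh_ne,
              Polynomial.natDegree_X_sub_C]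
            omega
          omega
        obtain ⟨k, hk⟩ := ih h hdh hh_ne
        refine ⟨k + 1, ?_⟩
        rw [hh, map_mul, ν.map_mul, ← hAΦ, ← hα, hk, ← WithTop.coe_add]
        congr 1
        ring
      · exact ⟨0, by rw [hval0 f hfa]; simp⟩
  have hratk : ∀ f : RatFunc K, f ≠ 0 →
      ∃ k : ℤ, ν (algebraMap (RatFunc K) L f) = ((α * k : ℤ) : WithTop ℤ) := by
    intro f hf
    have hnum := RatFunc.num_ne_zero hf
    have hden := RatFunc.denom_ne_zero f
    obtain ⟨k₁, hk₁⟩ := hpolyk f.num.natDegree f.num le_rfl hnum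
    obtain ⟨k₂, hk₂⟩ := hpolyk f.denom.natDegree f.denom le_rfl hden
    have hfd : f * algebraMap (Polynomial K) (RatFunc K) f.denom
        = algebraMap (Polynomial K) (RatFunc K) f.num := by
      exact (eq_div_iff (RatFunc.algebraMap_ne_zero hden)).mp (RatFunc.num_div_denom f).symm
    have h := congrArg ν (congrArg (algebraMap (RatFunc K) L) hfd)
    rw [map_mul, ν.map_mul, ← hΦap, ← hΦap, hk₁, hk₂] at h
    have hφf : algebraMap (RatFunc K) L f ≠ 0 := fun h0 =>
      hf ((algebraMap (RatFunc K) L).injective (by rw [h0, map_zero]))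
    obtain ⟨c, hc⟩ := WithTop.ne_top_iff_exists.mp (ν.ne_top_iff.mpr hφf)
    rw [← hc] at h
    have h2 : c + α * k₂ = α * k₁ := by exact_mod_cast h
    have hcv : c = α * (k₁ - k₂) := by rw [mul_sub]; linarith
    exact ⟨k₁ - k₂, by rw [← hc, hcv]⟩
  -- final step : t = 1
  have ht1 : t = 1 := by
    by_contra htne
    have ht2 : 2 ≤ t := by omega
    have hα2q : 2 * (q : ℤ) ≤ α := by
      rw [hαqt]
      calc 2 * (q : ℤ) = (q : ℤ) * 2 := by ring
      _ ≤ (q : ℤ) * t := mul_le_mul_of_nonneg_left ht2 hq0'.le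
    set α' : ℕ := α.toNat with hα'def
    have hα'val : ((α' : ℤ)) = α := Int.toNat_of_nonneg hα_pos.le
    have hch : ∀ r : Fin α', ∃ u : L, ν u = (((r : ℕ) : ℤ) : WithTop ℤ) := fun r => hsurj _
    choose u hu using hch
    have hu_ne : ∀ r, u r ≠ 0 := by
      intro r h
      have := hu r
      rw [h, ν.map_zero] at this
      exact (WithTop.top_ne_coe).elim (by rw [this])
    have hind : LinearIndependent (RatFunc K) u := by
      rw [Fintype.linearIndependent_iff]
      intro c hc
      by_contra hcn
      push_neg at hcn
      obtain ⟨i₁, hi₁⟩ := hcn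
      set S : Finset (Fin α') := Finset.univ.filter (fun i => c i ≠ 0) with hS
      have hi₁S : i₁ ∈ S := by simp [hS, hi₁]
      have hvals : ∀ i ∈ S, ∃ k : ℤ,
          ν (c i • u i) = ((α * k + ((i : ℕ) : ℤ) : ℤ) : WithTop ℤ) := by
        intro i hiS
        have hci : c i ≠ 0 := (Finset.mem_filter.mp hiS).2
        obtain ⟨k, hk⟩ := hratk (c i) hci
        refine ⟨k, ?_⟩
        rw [Algebra.smul_def, ν.map_mul, hk, hu, ← WithTop.coe_add]
      choose kk hkk using hvals
      obtain ⟨i₀, hi₀S, hmin⟩ := S.exists_min_image (fun i => ν (c i • u i)) ⟨i₁, hi₁S⟩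
      have hne_top : ν (c i₀ • u i₀) ≠ ⊤ := by
        rw [hkk i₀ hi₀S]; exact WithTop.coe_ne_top
      have hstrict : ∀ j ∈ (Finset.univ : Finset (Fin α')), j ≠ i₀ →
          ν (c i₀ • u i₀) < ν (c j • u j) := by
        intro j _ hjne
        by_cases hjS : j ∈ S
        · rcases lt_or_eq_of_le (hmin j hjS) with hlt | heqv
          · exact hlt
          · exfalso
            have h1 := hkk i₀ hi₀S
            have h2 := hkk j hjS
            rw [h1, h2] at heqv
            have h3 : α * kk i₀ hi₀S + ((i₀ : ℕ) : ℤ)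
                = α * kk j hjS + ((j : ℕ) : ℤ) := by exact_mod_cast heqv
            have hb1 : ((i₀ : ℕ) : ℤ) < α := by
              rw [← hα'val]; exact_mod_cast i₀.isLt
            have hb2 : ((j : ℕ) : ℤ) < α := by
              rw [← hα'val]; exact_mod_cast j.isLt
            have hb3 : (0 : ℤ) ≤ ((i₀ : ℕ) : ℤ) := by positivity
            have hb4 : (0 : ℤ) ≤ ((j : ℕ) : ℤ) := by positivity
            have h4 : α * (kk j hjS - kk i₀ hi₀S) = ((i₀ : ℕ) : ℤ) - ((j : ℕ) : ℤ) := by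
              rw [mul_sub]; linarith
            have hij : ((i₀ : ℕ) : ℤ) ≠ ((j : ℕ) : ℤ) := by
              intro hcontra
              apply hjne
              apply Fin.ext
              exact_mod_cast hcontra.symm
            rcases lt_trichotomy (kk j hjS - kk i₀ hi₀S) 0 with he | he | he
            · have h5 : kk j hjS - kk i₀ hi₀S ≤ -1 := by omega
              have h6 : α * (kk j hjS - kk i₀ hi₀S) ≤ α * (-1) :=
                mul_le_mul_of_nonneg_left h5 hα_pos.le
              rw [h4, mul_neg_one] at h6
              linarith only [h6, hb2, hb3]
            · rw [he, mul_zero] at h4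
              exact hij (by linarith only [h4])
            · have h5 : (1 : ℤ) ≤ kk j hjS - kk i₀ hi₀S := he
              have h6 : α * 1 ≤ α * (kk j hjS - kk i₀ hi₀S) :=
                mul_le_mul_of_nonneg_left h5 hα_pos.le
              rw [h4, mul_one] at h6
              linarith only [h6, hb1, hb4]
        · have hcj : c j = 0 := by
            by_contra hcj
            exact hjS (Finset.mem_filter.mpr ⟨Finset.mem_univ _, hcj⟩)
          rw [hcj, zero_smul, ν.map_zero]
          exact lt_top_iff_ne_top.mpr hne_top
      have hsum := val_sum_eq ν Finset.univ (fun i => c i • u i) i₀ (Finset.mem_univ _)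
        hne_top hstrict
      rw [hc, ν.map_zero] at hsum
      exact hne_top hsum.symm
    haveI : FiniteDimensional (RatFunc K) L :=
      FiniteDimensional.of_finrank_pos (by rw [hdeg]; omega)
    have hcard := hind.fintype_card_le_finrank
    rw [Fintype.card_fin, hdeg] at hcard
    have hαm : (α : ℤ) ≤ (m : ℤ) := by
      rw [← hα'val]; exact_mod_cast hcard
    have hq2' : (2 : ℤ) ≤ (q : ℤ) := by exact_mod_cast hq2
    linarith only [hαm, hα2q, hq2', hm']
  rw [← hα]
  rw [hαqt, ht1, mul_one]
end

section
/- Any two places ν₁ and ν₂ of L with ν₁(y − a) > 0 and ν₂(y − a) > 0 coincide; that is, y − a has exactly one zero in L, so the place P_{y−a} of K(y) is totally ramified in the degree-m extension L/K(y). -/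
open Polynomial

namespace UZAux

variable {K L : Type*} [Field K] [Field L]

/-- valuation of a sum with a unique strict minimum -/
theorem map_sum_eq (v : AddValuation L (WithTop ℤ)) {ι : Type*} [DecidableEq ι] {s : Finset ι} {f : ι → L}
    {i₀ : ι} (hi₀ : i₀ ∈ s) (htop : v (f i₀) ≠ ⊤)
    (hlt : ∀ i ∈ s, i ≠ i₀ → v (f i₀) < v (f i)) :
    v (∑ i ∈ s, f i) = v (f i₀) := by
  rw [← Finset.add_sum_erase _ f hi₀]
  apply AddValuation.map_add_eq_of_lt_left
  apply AddValuation.map_lt_sum' v (lt_top_iff_ne_top.mpr htop)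
  intro i hi
  exact hlt i (Finset.mem_of_mem_erase hi) (Finset.ne_of_mem_erase hi)

theorem val_eval₂_ge (v : AddValuation L (WithTop ℤ)) (φ : K →+* L)
    (hφ : ∀ c : K, c ≠ 0 → v (φ c) = 0) {w : L} (hw : 0 ≤ v w) (p : K[X]) :
    0 ≤ v (eval₂ φ w p) := by
  rw [eval₂_eq_sum, Polynomial.sum]
  apply AddValuation.map_le_sum
  intro i hi
  rw [AddValuation.map_mul, AddValuation.map_pow,
    hφ _ (Polynomial.mem_support_iff.mp hi), zero_add]
  exact nsmul_nonneg hw i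

theorem val_term (v : AddValuation L (WithTop ℤ)) (φ : K →+* L)
    (hφ : ∀ c : K, c ≠ 0 → v (φ c) = 0) {w : L} {zw : ℤ} (hvw : v w = (zw : ℤ))
    {p : K[X]} {i : ℕ} (hi : p.coeff i ≠ 0) :
    v (φ (p.coeff i) * w ^ i) = ((i * zw : ℤ) : WithTop ℤ) := by
  rw [AddValuation.map_mul, AddValuation.map_pow, hφ _ hi, zero_add, hvw,
    ← WithTop.coe_nsmul]
  norm_cast

theorem val_eval₂_of_pos (v : AddValuation L (WithTop ℤ)) (φ : K →+* L)
    (hφ : ∀ c : K, c ≠ 0 → v (φ c) = 0) {w : L} {zw : ℤ} (hvw : v w = (zw : ℤ))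
    (hzw : 0 < zw) {p : K[X]} (hp : p.coeff 0 ≠ 0) :
    v (eval₂ φ w p) = 0 := by
  have h0 : (0 : ℕ) ∈ p.support := Polynomial.mem_support_iff.mpr hp
  have hterm0 : v (φ (p.coeff 0) * w ^ 0) = 0 := by rw [pow_zero, mul_one, hφ _ hp]
  have htop : v (φ (p.coeff 0) * w ^ 0) ≠ ⊤ := by rw [hterm0]; simp
  have hlt : ∀ i ∈ p.support, i ≠ 0 →
      v (φ (p.coeff 0) * w ^ 0) < v (φ (p.coeff i) * w ^ i) := by
    intro i hi hne
    rw [hterm0, val_term v φ hφ hvw (Polynomial.mem_support_iff.mp hi)]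
    have : 0 < i := Nat.pos_of_ne_zero hne
    have : (0:ℤ) < i * zw := mul_pos (by exact_mod_cast this) hzw
    exact_mod_cast this
  rw [eval₂_eq_sum, Polynomial.sum, UZAux.map_sum_eq v h0 htop hlt, hterm0]

theorem val_eval₂_of_neg (v : AddValuation L (WithTop ℤ)) (φ : K →+* L)
    (hφ : ∀ c : K, c ≠ 0 → v (φ c) = 0) {w : L} {zw : ℤ} (hvw : v w = (zw : ℤ))
    (hzw : zw < 0) {p : K[X]} (hp : p ≠ 0) :
    v (eval₂ φ w p) = ((p.natDegree * zw : ℤ) : WithTop ℤ) := by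
  have hc : p.coeff p.natDegree ≠ 0 := Polynomial.leadingCoeff_ne_zero.mpr hp
  have h0 : p.natDegree ∈ p.support := Polynomial.mem_support_iff.mpr hc
  have hterm0 : v (φ (p.coeff p.natDegree) * w ^ p.natDegree)
      = ((p.natDegree * zw : ℤ) : WithTop ℤ) := val_term v φ hφ hvw hc
  have htop : v (φ (p.coeff p.natDegree) * w ^ p.natDegree) ≠ ⊤ := by
    rw [hterm0]; exact WithTop.coe_ne_top
  have hlt : ∀ i ∈ p.support, i ≠ p.natDegree →
      v (φ (p.coeff p.natDegree) * w ^ p.natDegree) < v (φ (p.coeff i) * w ^ i) := by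
    intro i hi hne
    rw [hterm0, val_term v φ hφ hvw (Polynomial.mem_support_iff.mp hi)]
    have hid : i < p.natDegree :=
      lt_of_le_of_ne (Polynomial.le_natDegree_of_ne_zero (Polynomial.mem_support_iff.mp hi)) hne
    exact_mod_cast mul_lt_mul_of_neg_right (by exact_mod_cast hid : (i:ℤ) < p.natDegree) hzw
  rw [eval₂_eq_sum, Polynomial.sum, UZAux.map_sum_eq v h0 htop hlt, hterm0]

theorem val_eval₂_trailing (v : AddValuation L (WithTop ℤ)) (φ : K →+* L)
    (hφ : ∀ c : K, c ≠ 0 → v (φ c) = 0) {w : L} {zw : ℤ} (hvw : v w = (zw : ℤ))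
    (hzw : 0 < zw) {p : K[X]} (hp : p ≠ 0) :
    v (eval₂ φ w p) = ((p.natTrailingDegree * zw : ℤ) : WithTop ℤ) := by
  have hc : p.coeff p.natTrailingDegree ≠ 0 := fun h =>
    hp (Polynomial.coeff_natTrailingDegree_eq_zero.mp h)
  have h0 : p.natTrailingDegree ∈ p.support := Polynomial.mem_support_iff.mpr hc
  have hterm0 : v (φ (p.coeff p.natTrailingDegree) * w ^ p.natTrailingDegree)
      = ((p.natTrailingDegree * zw : ℤ) : WithTop ℤ) := val_term v φ hφ hvw hc
  have htop : v (φ (p.coeff p.natTrailingDegree) * w ^ p.natTrailingDegree) ≠ ⊤ := by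
    rw [hterm0]; exact WithTop.coe_ne_top
  have hlt : ∀ i ∈ p.support, i ≠ p.natTrailingDegree →
      v (φ (p.coeff p.natTrailingDegree) * w ^ p.natTrailingDegree)
        < v (φ (p.coeff i) * w ^ i) := by
    intro i hi hne
    rw [hterm0, val_term v φ hφ hvw (Polynomial.mem_support_iff.mp hi)]
    have hid : p.natTrailingDegree < i :=
      lt_of_le_of_ne
        (Polynomial.natTrailingDegree_le_of_ne_zero (Polynomial.mem_support_iff.mp hi))
        (Ne.symm hne)
    exact_mod_cast mul_lt_mul_of_pos_right
      (by exact_mod_cast hid : (p.natTrailingDegree:ℤ) < i) hzw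
  rw [eval₂_eq_sum, Polynomial.sum, UZAux.map_sum_eq v h0 htop hlt, hterm0]

end UZAux


namespace UZAux

variable {K L : Type*} [Field K] [Field L] (φ : K →+* L) (t u : L) (m : ℕ)

/-- elements expressible with `t`-polynomial coefficients and `u`-powers below `m` -/
noncomputable def elt (s : Fin m → K[X]) : L := ∑ i, eval₂ φ t (s i) * u ^ (i : ℕ)

theorem elt_zero : elt φ t u m 0 = 0 := by simp [elt]

theorem elt_add (s s' : Fin m → K[X]) :
    elt φ t u m (s + s') = elt φ t u m s + elt φ t u m s' := by
  simp [elt, add_mul, Finset.sum_add_distrib]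

theorem elt_single (i : Fin m) (p : K[X]) :
    elt φ t u m (fun j => if j = i then p else 0) = eval₂ φ t p * u ^ (i : ℕ) := by
  rw [elt, Finset.sum_eq_single i]
  · simp
  · intro j _ hj; simp [hj]
  · simp

def P : Set L := Set.range (elt φ t u m)

theorem P_zero : (0 : L) ∈ P φ t u m := ⟨0, elt_zero φ t u m⟩

theorem P_add {z₁ z₂ : L} (h₁ : z₁ ∈ P φ t u m) (h₂ : z₂ ∈ P φ t u m) :
    z₁ + z₂ ∈ P φ t u m := by
  obtain ⟨s₁, rfl⟩ := h₁; obtain ⟨s₂, rfl⟩ := h₂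
  exact ⟨s₁ + s₂, elt_add φ t u m s₁ s₂⟩

theorem P_sum {ι : Type*} (F : Finset ι) (f : ι → L) (h : ∀ i ∈ F, f i ∈ P φ t u m) :
    (∑ i ∈ F, f i) ∈ P φ t u m := by
  classical
  induction F using Finset.induction_on with
  | empty => simpa using P_zero φ t u m
  | insert i F hni ih =>
    rw [Finset.sum_insert hni]
    exact P_add φ t u m (h i (Finset.mem_insert_self i F))
      (ih fun j hj => h j (Finset.mem_insert_of_mem hj))

theorem P_mulE (p : K[X]) {z : L} (h : z ∈ P φ t u m) : eval₂ φ t p * z ∈ P φ t u m := by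
  obtain ⟨s, rfl⟩ := h
  refine ⟨fun j => p * s j, ?_⟩
  simp [elt, Finset.mul_sum, eval₂_mul, mul_assoc]

theorem P_single (i : Fin m) (p : K[X]) : eval₂ φ t p * u ^ (i : ℕ) ∈ P φ t u m :=
  ⟨_, elt_single φ t u m i p⟩

theorem P_evalu {p : K[X]} (hdeg : p.natDegree < m) : eval₂ φ u p ∈ P φ t u m := by
  rw [eval₂_eq_sum, Polynomial.sum]
  apply P_sum
  intro i hi
  have him : i < m := lt_of_le_of_lt (Polynomial.le_natDegree_of_mem_supp i hi) hdeg
  have := P_single φ t u m (⟨i, him⟩ : Fin m) (C (p.coeff i))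
  simpa [eval₂_C] using this

variable {c hq : K[X]}

theorem P_mulu (hrel : u ^ m = eval₂ φ t c * eval₂ φ u hq) (hqdeg : hq.natDegree < m)
    {z : L} (h : z ∈ P φ t u m) : u * z ∈ P φ t u m := by
  obtain ⟨s, rfl⟩ := h
  rw [elt, Finset.mul_sum]
  apply P_sum
  intro i _
  have : u * (eval₂ φ t (s i) * u ^ (i : ℕ)) = eval₂ φ t (s i) * u ^ ((i : ℕ) + 1) := by
    ring
  rw [this]
  by_cases hlt : (i : ℕ) + 1 < m
  · exact P_single φ t u m (⟨(i : ℕ) + 1, hlt⟩ : Fin m) (s i)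
  · have hieq : (i : ℕ) + 1 = m := by have := i.isLt; omega
    rw [hieq, hrel, ← mul_assoc, ← eval₂_mul]
    exact P_mulE φ t u m _ (P_evalu φ t u m hqdeg)

theorem P_mulupow (hrel : u ^ m = eval₂ φ t c * eval₂ φ u hq) (hqdeg : hq.natDegree < m)
    (k : ℕ) {z : L} (h : z ∈ P φ t u m) : u ^ k * z ∈ P φ t u m := by
  induction k with
  | zero => simpa using h
  | succ k ih =>
    have : u ^ (k + 1) * z = u * (u ^ k * z) := by ring
    rw [this]
    exact P_mulu φ t u m hrel hqdeg ih

theorem P_mul (hrel : u ^ m = eval₂ φ t c * eval₂ φ u hq) (hqdeg : hq.natDegree < m)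
    {z₁ z₂ : L} (h₁ : z₁ ∈ P φ t u m) (h₂ : z₂ ∈ P φ t u m) : z₁ * z₂ ∈ P φ t u m := by
  obtain ⟨s, rfl⟩ := h₁
  rw [elt, Finset.sum_mul]
  apply P_sum
  intro i _
  have : eval₂ φ t (s i) * u ^ (i : ℕ) * z₂ = eval₂ φ t (s i) * (u ^ (i : ℕ) * z₂) := by ring
  rw [this]
  exact P_mulE φ t u m _ (P_mulupow φ t u m hrel hqdeg _ h₂)

theorem P_one (hm : 0 < m) : (1 : L) ∈ P φ t u m := by
  have := P_single φ t u m (⟨0, hm⟩ : Fin m) 1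
  simpa using this

theorem P_phi (hm : 0 < m) (k : K) : φ k ∈ P φ t u m := by
  have := P_single φ t u m (⟨0, hm⟩ : Fin m) (C k)
  simpa [eval₂_C] using this

theorem P_t (hm : 0 < m) : t ∈ P φ t u m := by
  have := P_single φ t u m (⟨0, hm⟩ : Fin m) X
  simpa [eval₂_X] using this

theorem P_u (hm : 1 < m) : u ∈ P φ t u m := by
  have := P_single φ t u m (⟨1, hm⟩ : Fin m) 1
  simpa using this

theorem P_evalx (hrel : u ^ m = eval₂ φ t c * eval₂ φ u hq) (hqdeg : hq.natDegree < m)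
    (hm : 1 < m) {x : L} (hx : x ∈ P φ t u m) (p : K[X]) : eval₂ φ x p ∈ P φ t u m := by
  have hxpow : ∀ k : ℕ, x ^ k ∈ P φ t u m := by
    intro k
    induction k with
    | zero => simpa using P_one φ t u m (by omega)
    | succ k ih => rw [pow_succ]; exact P_mul φ t u m hrel hqdeg ih hx
  rw [eval₂_eq_sum, Polynomial.sum]
  apply P_sum
  intro i _
  exact P_mul φ t u m hrel hqdeg (P_phi φ t u m (by omega) _) (hxpow i)

end UZAux

set_option maxHeartbeats 1000000 in
/-- Any two places of L at which y − a has positive valuation coincide;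
i.e. y − a has exactly one zero in L, so P_{y−a} is totally ramified in L/K(y). -/
theorem unique_zero_of_y_sub_a
    (K : Type*) [Field K] [IsAlgClosed K] (p : ℕ) (hp : p.Prime) [CharP K p]
    (n : ℕ) (hn : 1 ≤ n) (q m : ℕ) (hq : q = p ^ n) (hm : m = q + 1)
    (a b : K) (hb : b ≠ 0)
    (g : Polynomial K) (hga : g.eval a ≠ 0) (hgdeg : g.natDegree < m)
    (hgcd : Nat.gcd (m - g.natDegree) m = 1)
    (L : Type*) [Field L] [Algebra (RatFunc K) L]
    (hdeg : Module.finrank (RatFunc K) L = m)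
    (y : L) (hgen : Algebra.adjoin (RatFunc K) {y} = ⊤)
    (heq : (y - algebraMap (RatFunc K) L (RatFunc.C a)) ^ m
        + algebraMap (RatFunc K) L (RatFunc.C b) * (y - algebraMap (RatFunc K) L (RatFunc.C a))
        = algebraMap (RatFunc K) L
            ((RatFunc.X - RatFunc.C a) ^ m / algebraMap (Polynomial K) (RatFunc K) g))
    (ν₁ ν₂ : AddValuation L (WithTop ℤ))
    (hsurj₁ : Function.Surjective ν₁) (hsurj₂ : Function.Surjective ν₂)
    (htriv₁ : ∀ c : K, c ≠ 0 → ν₁ (algebraMap (RatFunc K) L (RatFunc.C c)) = 0)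
    (htriv₂ : ∀ c : K, c ≠ 0 → ν₂ (algebraMap (RatFunc K) L (RatFunc.C c)) = 0)
    (hy₁ : 0 < ν₁ (y - algebraMap (RatFunc K) L (RatFunc.C a))) (hy₂ : 0 < ν₂ (y - algebraMap (RatFunc K) L (RatFunc.C a))) :
    ν₁ = ν₂ := by
  classical
  have hq2 : 2 ≤ q := by
    subst hq
    calc 2 ≤ p := hp.two_le
      _ ≤ p ^ n := Nat.le_self_pow (by omega) p
  have hm0 : 0 < m := by omega
  have hm1 : 1 < m := by omega
  set φ : K →+* L := (algebraMap (RatFunc K) L).comp RatFunc.C with hφdef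
  have hφapp : ∀ k : K, φ k = algebraMap (RatFunc K) L (RatFunc.C k) := by
    intro k; rw [hφdef]; rfl
  set t : L := y - algebraMap (RatFunc K) L (RatFunc.C a) with htdef
  set xL : L := algebraMap (RatFunc K) L RatFunc.X with hxLdef
  set u : L := xL - algebraMap (RatFunc K) L (RatFunc.C a) with hudef
  have hψ : ∀ pg : Polynomial K,
      algebraMap (RatFunc K) L (algebraMap (Polynomial K) (RatFunc K) pg) = eval₂ φ xL pg := by
    have hhom : (algebraMap (RatFunc K) L).comp (algebraMap (Polynomial K) (RatFunc K))
        = eval₂RingHom φ xL := by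
      apply Polynomial.ringHom_ext
      · intro k
        simp [RatFunc.algebraMap_C, hφapp]
      · simp [RatFunc.algebraMap_X, hxLdef]
    intro pg
    have := DFunLike.congr_fun hhom pg
    simpa using this
  have hg0 : g ≠ 0 := fun h => hga (by simp [h])
  have hG : algebraMap (Polynomial K) (RatFunc K) g ≠ 0 := RatFunc.algebraMap_ne_zero hg0
  have hAinj : Function.Injective (algebraMap (RatFunc K) L) :=
    (algebraMap (RatFunc K) L).injective
  have huA : u = algebraMap (RatFunc K) L (RatFunc.X - RatFunc.C a) := by
    rw [hudef, hxLdef, map_sub]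
  have hu0 : u ≠ 0 := by
    rw [huA]
    intro h
    have hX : (RatFunc.X - RatFunc.C a : RatFunc K)
        = algebraMap (Polynomial K) (RatFunc K) (X - C a) := by
      simp [RatFunc.algebraMap_X, RatFunc.algebraMap_C]
    have h2 : (RatFunc.X - RatFunc.C a : RatFunc K) = 0 := hAinj (by simpa using h)
    rw [hX] at h2
    exact RatFunc.algebraMap_ne_zero (Polynomial.X_sub_C_ne_zero a) h2
  set c : Polynomial K := X ^ m + C b * X with hcdef
  set gh : Polynomial K := g.comp (X + C a) with hghdef
  have hc : eval₂ φ t c = t ^ m + algebraMap (RatFunc K) L (RatFunc.C b) * t := by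
    rw [hcdef]
    simp only [eval₂_add, eval₂_mul, eval₂_pow, eval₂_X, eval₂_C]
    rw [hφapp]
  have hxLu : xL = u + φ a := by rw [hudef, hφapp]; ring
  have hcomp : eval₂ φ xL g = eval₂ φ u gh := by
    rw [hghdef, Polynomial.eval₂_comp]
    have h1 : eval₂ φ u (X + C a) = xL := by
      rw [eval₂_add, eval₂_X, eval₂_C, hxLu]
    rw [h1]
  have hrel : u ^ m = eval₂ φ t c * eval₂ φ u gh := by
    have h1 : ((RatFunc.X - RatFunc.C a) ^ m / algebraMap (Polynomial K) (RatFunc K) g)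
        * algebraMap (Polynomial K) (RatFunc K) g = (RatFunc.X - RatFunc.C a) ^ m :=
      div_mul_cancel₀ _ hG
    have h2 : u ^ m = algebraMap (RatFunc K) L ((RatFunc.X - RatFunc.C a) ^ m) := by
      rw [huA, map_pow]
    rw [h2, ← h1, map_mul, ← heq, hψ g, hcomp, ← hc]
  have hgh_c0 : gh.coeff 0 ≠ 0 := by
    rw [hghdef, Polynomial.coeff_zero_eq_eval_zero, Polynomial.eval_comp]
    simpa using hga
  have hghne : gh ≠ 0 := fun h => hgh_c0 (by rw [h]; simp)
  have hghdeg' : gh.natDegree < m := by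
    rw [hghdef, Polynomial.natDegree_comp, Polynomial.natDegree_X_add_C, mul_one]
    exact hgdeg
  have hcc0 : c.coeff 0 = 0 := by
    rw [hcdef]
    simp only [Polynomial.coeff_add, Polynomial.coeff_X_pow, Polynomial.coeff_C_mul,
      Polynomial.coeff_X_zero, mul_zero, if_neg (by omega : ¬ (0:ℕ) = m), add_zero]
  have ht0 : t ≠ 0 := by
    intro h
    rw [h, Polynomial.eval₂_at_zero, hcc0, map_zero, zero_mul] at hrel
    exact hu0 (pow_eq_zero_iff hm0.ne' |>.mp hrel)
  have hrep : ∀ z : L, ∃ sN sQ : Fin m → Polynomial K,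
      UZAux.elt φ t u m sQ ≠ 0 ∧ z * UZAux.elt φ t u m sQ = UZAux.elt φ t u m sN := by
    intro z
    have hz : z ∈ Algebra.adjoin (RatFunc K) ({y} : Set L) := by
      rw [hgen]; exact Algebra.mem_top
    have hM : ∃ N Q : L, N ∈ UZAux.P φ t u m ∧ Q ∈ UZAux.P φ t u m ∧ Q ≠ 0 ∧ z * Q = N := by
      refine Algebra.adjoin_induction
        (p := fun w _ => ∃ N Q : L,
          N ∈ UZAux.P φ t u m ∧ Q ∈ UZAux.P φ t u m ∧ Q ≠ 0 ∧ w * Q = N)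
        ?_ ?_ ?_ ?_ hz
      · intro w hw
        rw [Set.mem_singleton_iff] at hw
        subst hw
        refine ⟨t + φ a, 1, ?_, UZAux.P_one φ t u m hm0, one_ne_zero, ?_⟩
        · exact UZAux.P_add φ t u m (UZAux.P_t φ t u m hm0) (UZAux.P_phi φ t u m hm0 a)
        · rw [mul_one, htdef, hφapp]; ring
      · intro r
        refine ⟨eval₂ φ xL r.num, eval₂ φ xL r.denom, ?_, ?_, ?_, ?_⟩
        · exact UZAux.P_evalx φ t u m hrel hghdeg' hm1
            (by
              rw [hxLu]
              exact UZAux.P_add φ t u m (UZAux.P_u φ t u m hm1) (UZAux.P_phi φ t u m hm0 a))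
            r.num
        · exact UZAux.P_evalx φ t u m hrel hghdeg' hm1
            (by
              have : xL = u + φ a := hxLu
              rw [this]
              exact UZAux.P_add φ t u m (UZAux.P_u φ t u m hm1) (UZAux.P_phi φ t u m hm0 a))
            r.denom
        · rw [← hψ]
          exact fun h => RatFunc.algebraMap_ne_zero (RatFunc.denom_ne_zero r) (hAinj (by simpa using h))
        · rw [← hψ, ← hψ, ← map_mul]
          congr 1
          have hd : (algebraMap (Polynomial K) (RatFunc K) r.denom) ≠ 0 :=
            RatFunc.algebraMap_ne_zero (RatFunc.denom_ne_zero r)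
          exact ((div_eq_iff hd).mp (RatFunc.num_div_denom r)).symm.symm ▸ rfl
      · rintro w₁ w₂ _ _ ⟨N₁, Q₁, hN₁, hQ₁, hQ₁0, hw₁⟩ ⟨N₂, Q₂, hN₂, hQ₂, hQ₂0, hw₂⟩
        refine ⟨N₁ * Q₂ + N₂ * Q₁, Q₁ * Q₂,
          UZAux.P_add φ t u m (UZAux.P_mul φ t u m hrel hghdeg' hN₁ hQ₂)
            (UZAux.P_mul φ t u m hrel hghdeg' hN₂ hQ₁),
          UZAux.P_mul φ t u m hrel hghdeg' hQ₁ hQ₂, mul_ne_zero hQ₁0 hQ₂0, ?_⟩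
        have : (w₁ + w₂) * (Q₁ * Q₂) = (w₁ * Q₁) * Q₂ + (w₂ * Q₂) * Q₁ := by ring
        rw [this, hw₁, hw₂]
      · rintro w₁ w₂ _ _ ⟨N₁, Q₁, hN₁, hQ₁, hQ₁0, hw₁⟩ ⟨N₂, Q₂, hN₂, hQ₂, hQ₂0, hw₂⟩
        refine ⟨N₁ * N₂, Q₁ * Q₂, UZAux.P_mul φ t u m hrel hghdeg' hN₁ hN₂,
          UZAux.P_mul φ t u m hrel hghdeg' hQ₁ hQ₂, mul_ne_zero hQ₁0 hQ₂0, ?_⟩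
        have : w₁ * w₂ * (Q₁ * Q₂) = (w₁ * Q₁) * (w₂ * Q₂) := by ring
        rw [this, hw₁, hw₂]
    obtain ⟨N, Q, ⟨sN, hsN⟩, ⟨sQ, hsQ⟩, hQ0, hzQ⟩ := hM
    exact ⟨sN, sQ, by rw [hsQ]; exact hQ0, by rw [hsQ, hsN]; exact hzQ⟩
  have main : ∀ ν : AddValuation L (WithTop ℤ), Function.Surjective ν →
      (∀ k : K, k ≠ 0 → ν (algebraMap (RatFunc K) L (RatFunc.C k)) = 0) →
      0 < ν t →
      ∀ s : Fin m → Polynomial K, ν (UZAux.elt φ t u m s) =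
        (Finset.univ.filter (fun i : Fin m => s i ≠ 0)).inf
          (fun i => (((i : ℕ) + m * (s i).natTrailingDegree : ℤ) : WithTop ℤ)) := by
    intro ν hsurj htriv hνt
    have hφtriv : ∀ k : K, k ≠ 0 → ν (φ k) = 0 := by
      intro k hk; rw [hφapp]; exact htriv k hk
    have hνttop : ν t ≠ ⊤ := (AddValuation.ne_top_iff ν).mpr ht0
    obtain ⟨zt, hzt0⟩ := WithTop.ne_top_iff_exists.mp hνttop
    have hzt : ν t = (zt : WithTop ℤ) := hzt0.symm
    have hztpos : 0 < zt := by
      rw [hzt] at hνt; exact_mod_cast hνt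
    have hνutop : ν u ≠ ⊤ := (AddValuation.ne_top_iff ν).mpr hu0
    obtain ⟨zu, hzu0⟩ := WithTop.ne_top_iff_exists.mp hνutop
    have hzu : ν u = (zu : WithTop ℤ) := hzu0.symm
    -- valuation of the LHS polynomial in t
    have hE : ν (eval₂ φ t c) = ν t := by
      rw [hc]
      have h1 : ν (algebraMap (RatFunc K) L (RatFunc.C b) * t) = ν t := by
        rw [AddValuation.map_mul, htriv b hb, zero_add]
      have h2 : ν (algebraMap (RatFunc K) L (RatFunc.C b) * t) < ν (t ^ m) := by
        rw [h1, AddValuation.map_pow, hzt, ← WithTop.coe_nsmul]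
        have hmz : (2:ℤ) ≤ (m:ℤ) := by exact_mod_cast (by omega : 2 ≤ m)
        have : zt < m • zt := by
          rw [nsmul_eq_mul]
          nlinarith
        exact_mod_cast this
      rw [AddValuation.map_add_eq_of_lt_right ν h2, h1]
    have heqν : ((m * zu : ℤ) : WithTop ℤ) = (zt : WithTop ℤ) + ν (eval₂ φ u gh) := by
      have h1 : ν (u ^ m) = ((m * zu : ℤ) : WithTop ℤ) := by
        rw [AddValuation.map_pow, hzu, ← WithTop.coe_nsmul]
        norm_cast
      rw [← h1, hrel, AddValuation.map_mul, hE, hzt]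
    have hzupos : 0 < zu := by
      rcases lt_trichotomy zu 0 with hneg | hzero | hpos
      · exfalso
        rw [UZAux.val_eval₂_of_neg ν φ hφtriv hzu hneg hghne] at heqν
        have h3 : (m:ℤ) * zu = zt + gh.natDegree * zu := by exact_mod_cast heqν
        have hd : (gh.natDegree : ℤ) < m := by exact_mod_cast hghdeg'
        have hd0 : (0:ℤ) ≤ (gh.natDegree : ℤ) := by positivity
        nlinarith
      · exfalso
        have h0 : (0 : WithTop ℤ) ≤ ν (eval₂ φ u gh) :=
          UZAux.val_eval₂_ge ν φ hφtriv (by rw [hzu, hzero]; exact le_refl _) gh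
        have hgtop : ν (eval₂ φ u gh) ≠ ⊤ := by
          intro htp
          rw [htp, add_top] at heqν
          exact WithTop.coe_ne_top heqν
        obtain ⟨k, hk⟩ := WithTop.ne_top_iff_exists.mp hgtop
        rw [← hk] at heqν h0
        have h3 : m * zu = zt + k := by exact_mod_cast heqν
        have h4 : (0:ℤ) ≤ k := by exact_mod_cast h0
        rw [hzero] at h3
        omega
      · exact hpos
    have hgh0ν : ν (eval₂ φ u gh) = 0 := UZAux.val_eval₂_of_pos ν φ hφtriv hzu hzupos hgh_c0
    have hmzt : zt = m * zu := by
      rw [hgh0ν, add_zero] at heqν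
      exact_mod_cast heqν.symm
    -- the valuation formula for elements in reduced form
    have form : ∀ s : Fin m → Polynomial K, s ≠ 0 → ∃ k : ℤ,
        (Finset.univ.filter (fun i : Fin m => s i ≠ 0)).inf
          (fun i => (((i : ℕ) + m * (s i).natTrailingDegree : ℤ) : WithTop ℤ)) = (k : WithTop ℤ)
        ∧ ν (UZAux.elt φ t u m s) = ((k * zu : ℤ) : WithTop ℤ) := by
      intro s hs
      set F := Finset.univ.filter (fun i : Fin m => s i ≠ 0) with hF
      have hFne : F.Nonempty := by
        obtain ⟨i, hi⟩ := Function.ne_iff.mp hs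
        have hi' : s i ≠ 0 := by simpa using hi
        exact ⟨i, by simp [hF, hi']⟩
      obtain ⟨i₀, hi₀F, hinf⟩ := Finset.exists_mem_eq_inf F hFne
        (fun i => (((i : ℕ) + m * (s i).natTrailingDegree : ℤ) : WithTop ℤ))
      have hi₀ : s i₀ ≠ 0 := by
        have := Finset.mem_filter.mp hi₀F
        exact this.2
      refine ⟨(i₀ : ℕ) + m * (s i₀).natTrailingDegree, hinf, ?_⟩
      have hsum : UZAux.elt φ t u m s = ∑ i ∈ F, eval₂ φ t (s i) * u ^ (i : ℕ) := by
        rw [UZAux.elt, hF]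
        exact (Finset.sum_filter_of_ne (fun i _ hne => by
          intro h0
          apply hne
          rw [h0, eval₂_zero, zero_mul])).symm
      have hval : ∀ i ∈ F, ν (eval₂ φ t (s i) * u ^ (i : ℕ))
          = (((((i:ℕ) + m * (s i).natTrailingDegree) * zu : ℤ)) : WithTop ℤ) := by
        intro i hiF
        have hsi : s i ≠ 0 := (Finset.mem_filter.mp hiF).2
        rw [AddValuation.map_mul, UZAux.val_eval₂_trailing ν φ hφtriv hzt hztpos hsi,
          AddValuation.map_pow, hzu, ← WithTop.coe_nsmul, ← WithTop.coe_add]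
        congr 1
        rw [nsmul_eq_mul, hmzt]
        push_cast
        ring
      have hltv : ∀ i ∈ F, i ≠ i₀ →
          ν (eval₂ φ t (s i₀) * u ^ (i₀:ℕ)) < ν (eval₂ φ t (s i) * u ^ (i:ℕ)) := by
        intro i hiF hne
        rw [hval i₀ hi₀F, hval i hiF]
        have hle : (((i₀:ℕ) + m * (s i₀).natTrailingDegree : ℤ))
            ≤ (((i:ℕ) + m * (s i).natTrailingDegree : ℤ)) := by
          have h5 : ((((i₀:ℕ) + m * (s i₀).natTrailingDegree : ℤ)) : WithTop ℤ)
              ≤ ((((i:ℕ) + m * (s i).natTrailingDegree : ℤ)) : WithTop ℤ) := by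
            rw [← hinf]
            exact Finset.inf_le hiF
          exact_mod_cast h5
        have hne2 : (((i₀:ℕ) + m * (s i₀).natTrailingDegree : ℤ))
            ≠ (((i:ℕ) + m * (s i).natTrailingDegree : ℤ)) := by
          intro hE2
          apply hne
          have hk : ((i₀:ℤ) - i) = (m:ℤ) * ((s i).natTrailingDegree - (s i₀).natTrailingDegree) := by
            linear_combination hE2
          have h1 : ((i:ℤ)) < m := by exact_mod_cast i.isLt
          have h2 : ((i₀:ℤ)) < m := by exact_mod_cast i₀.isLt
          have h3 : (0:ℤ) ≤ (i:ℤ) := by positivity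
          have h4 : (0:ℤ) ≤ (i₀:ℤ) := by positivity
          have hmpos : (0:ℤ) < (m:ℤ) := by exact_mod_cast hm0
          set d : ℤ := ((s i).natTrailingDegree : ℤ) - ((s i₀).natTrailingDegree : ℤ) with hdd
          have hival : (i₀:ℤ) = (i:ℤ) := by
            rcases lt_trichotomy d 0 with hd | hd | hd
            · exfalso
              have : (m:ℤ) * d ≤ (m:ℤ) * (-1) := by
                apply mul_le_mul_of_nonneg_left (by omega) (le_of_lt hmpos)
              nlinarith
            · rw [hd, mul_zero] at hk; linarith
            · exfalso
              have : (m:ℤ) * 1 ≤ (m:ℤ) * d := by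
                apply mul_le_mul_of_nonneg_left (by omega) (le_of_lt hmpos)
              nlinarith
          exact Fin.ext (by exact_mod_cast hival.symm)
        have hlt : (((i₀:ℕ) + m * (s i₀).natTrailingDegree : ℤ))
            < (((i:ℕ) + m * (s i).natTrailingDegree : ℤ)) := lt_of_le_of_ne hle hne2
        have : (((i₀:ℕ) + m * (s i₀).natTrailingDegree : ℤ)) * zu
            < (((i:ℕ) + m * (s i).natTrailingDegree : ℤ)) * zu :=
          mul_lt_mul_of_pos_right hlt hzupos
        exact_mod_cast this
      have htop0 : ν (eval₂ φ t (s i₀) * u ^ (i₀:ℕ)) ≠ ⊤ := by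
        rw [hval i₀ hi₀F]; exact WithTop.coe_ne_top
      rw [hsum, UZAux.map_sum_eq ν hi₀F htop0 hltv, hval i₀ hi₀F]
    -- surjectivity forces ν u = 1
    obtain ⟨z1, hz1⟩ := hsurj 1
    have hz1ne : z1 ≠ 0 := by
      intro h
      rw [h, AddValuation.map_zero] at hz1
      simp at hz1
    obtain ⟨sN, sQ, hQne, hzQ⟩ := hrep z1
    have hsQne : sQ ≠ 0 := fun h => hQne (by rw [h, UZAux.elt_zero])
    have hNne : UZAux.elt φ t u m sN ≠ 0 := by rw [← hzQ]; exact mul_ne_zero hz1ne hQne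
    have hsNne : sN ≠ 0 := fun h => hNne (by rw [h, UZAux.elt_zero])
    obtain ⟨kQ, _, hkQv⟩ := form sQ hsQne
    obtain ⟨kN, _, hkNv⟩ := form sN hsNne
    have hsum2 : ν z1 + ν (UZAux.elt φ t u m sQ) = ν (UZAux.elt φ t u m sN) := by
      rw [← AddValuation.map_mul, hzQ]
    rw [hz1, hkQv, hkNv] at hsum2
    have hZ : 1 + kQ * zu = kN * zu := by exact_mod_cast hsum2
    have hzu1 : zu = 1 := by
      have hdvd : zu ∣ 1 := ⟨kN - kQ, by linear_combination hZ⟩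
      rcases Int.isUnit_iff.mp (isUnit_of_dvd_one hdvd) with h | h
      · exact h
      · omega
    intro s
    by_cases hs : s = 0
    · subst hs
      rw [UZAux.elt_zero, AddValuation.map_zero]
      have hemp : (Finset.univ.filter (fun i : Fin m => (0 : Fin m → Polynomial K) i ≠ 0)) = ∅ := by
        simp
      rw [hemp, Finset.inf_empty]
    · obtain ⟨k, hki, hkv⟩ := form s hs
      rw [hkv, hzu1, mul_one, ← hki]
  -- conclude
  have h1 := main ν₁ hsurj₁ htriv₁ hy₁
  have h2 := main ν₂ hsurj₂ htriv₂ hy₂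
  apply AddValuation.ext
  intro z
  obtain ⟨sN, sQ, hQne, hzQ⟩ := hrep z
  have e1 : ν₁ z + ν₁ (UZAux.elt φ t u m sQ) = ν₁ (UZAux.elt φ t u m sN) := by
    rw [← AddValuation.map_mul, hzQ]
  have e2 : ν₂ z + ν₂ (UZAux.elt φ t u m sQ) = ν₂ (UZAux.elt φ t u m sN) := by
    rw [← AddValuation.map_mul, hzQ]
  have hQtop : (Finset.univ.filter (fun i : Fin m => sQ i ≠ 0)).inf
      (fun i => (((i : ℕ) + m * (sQ i).natTrailingDegree : ℤ) : WithTop ℤ)) ≠ ⊤ := by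
    rw [← h1 sQ]
    exact (AddValuation.ne_top_iff ν₁).mpr hQne
  rw [h1 sQ, h1 sN] at e1
  rw [h2 sQ, h2 sN] at e2
  exact WithTop.add_right_cancel hQtop (e1.trans e2.symm)
end

section
/- There exists a place ν of L lying above the place P_{x−a} of K(x) (i.e., with ν(x − a) > 0) whose ramification index e = ν(x − a) over P_{x−a} equals q; in particular e is divisible by the characteristic p (so P_{x−a} is wildly ramified in L/K(x)) and gcd(e, m) = 1. -/
noncomputable section WildHelper

open Polynomial

namespace WildHelper

variable {K : Type*} [Field K]

/-- The contraction map whose fixed point parametrizes the wild branch. -/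
def psi (q : ℕ) (β a : K) (g : Polynomial K) (z : PowerSeries K) : PowerSeries K :=
  PowerSeries.X ^ q * (PowerSeries.X * z - (PowerSeries.C (R := K)) β) *
    (g.eval₂ ((PowerSeries.C (R := K))) ((PowerSeries.C (R := K)) a + z))

lemma dvd_psi_sub (q : ℕ) (β a : K) (g : Polynomial K) (z w : PowerSeries K) :
    (PowerSeries.X ^ q * (z - w)) ∣ psi q β a g z - psi q β a g w := by
  have h := Polynomial.sub_dvd_eval_sub ((PowerSeries.C (R := K)) a + z) ((PowerSeries.C (R := K)) a + w)
      (g.map ((PowerSeries.C (R := K))))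
  rw [add_sub_add_left_eq_sub, Polynomial.eval_map, Polynomial.eval_map] at h
  obtain ⟨c, hc⟩ := h
  refine ⟨PowerSeries.X * (g.eval₂ ((PowerSeries.C (R := K))) ((PowerSeries.C (R := K)) a + z))
      + (PowerSeries.X * w - (PowerSeries.C (R := K)) β) * c, ?_⟩
  unfold psi
  linear_combination (PowerSeries.X ^ q * (PowerSeries.X * w - (PowerSeries.C (R := K)) β)) * hc

/-- Iteration sequence converging to the fixed point. -/
def xiSeq (q : ℕ) (β a : K) (g : Polynomial K) : ℕ → PowerSeries K
  | 0 => 0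
  | (k + 1) => psi q β a g (xiSeq q β a g k)

lemma X_pow_dvd_xiSeq_succ_sub (q : ℕ) (hq : 1 ≤ q) (β a : K) (g : Polynomial K) :
    ∀ k, (PowerSeries.X : PowerSeries K) ^ (q * (k + 1)) ∣
      xiSeq q β a g (k + 1) - xiSeq q β a g k
  | 0 => by
      have h0 : xiSeq q β a g 0 = 0 := rfl
      have h1 : xiSeq q β a g 1 = psi q β a g 0 := by rw [xiSeq, h0]
      rw [h0, h1, sub_zero, psi, Nat.mul_one q]
      exact dvd_mul_of_dvd_left (dvd_mul_right ((PowerSeries.X : PowerSeries K) ^ q) _) _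
  | (k + 1) => by
      have h1 := X_pow_dvd_xiSeq_succ_sub q hq β a g k
      have h2 := dvd_psi_sub q β a g (xiSeq q β a g (k + 1)) (xiSeq q β a g k)
      have : (PowerSeries.X : PowerSeries K) ^ (q * (k + 2)) ∣
          PowerSeries.X ^ q * (xiSeq q β a g (k + 1) - xiSeq q β a g k) := by
        have : q * (k + 2) = q + q * (k + 1) := by ring
        rw [this, pow_add]
        exact mul_dvd_mul dvd_rfl h1
      exact this.trans h2

lemma X_pow_dvd_xiSeq_sub_of_le (q : ℕ) (hq : 1 ≤ q) (β a : K) (g : Polynomial K)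
    {k l : ℕ} (hkl : k ≤ l) :
    (PowerSeries.X : PowerSeries K) ^ (q * (k + 1)) ∣ xiSeq q β a g l - xiSeq q β a g k := by
  induction l, hkl using Nat.le_induction with
  | base => simp
  | succ l hl ih =>
      have h1 := X_pow_dvd_xiSeq_succ_sub q hq β a g l
      have h1' : (PowerSeries.X : PowerSeries K) ^ (q * (k + 1)) ∣
          xiSeq q β a g (l + 1) - xiSeq q β a g l :=
        (pow_dvd_pow _ (by nlinarith)).trans h1
      have := dvd_add h1' ih
      simpa [sub_add_sub_cancel] using this

/-- The fixed point. -/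
def xiFix (q : ℕ) (β a : K) (g : Polynomial K) : PowerSeries K :=
  PowerSeries.mk fun d => PowerSeries.coeff (R := K) d (xiSeq q β a g (d + 1))

lemma coeff_xiSeq_eq (q : ℕ) (hq : 1 ≤ q) (β a : K) (g : Polynomial K)
    {d k : ℕ} (h : d + 1 ≤ k) :
    PowerSeries.coeff (R := K) d (xiSeq q β a g k) = PowerSeries.coeff (R := K) d (xiFix q β a g) := by
  rw [xiFix, PowerSeries.coeff_mk]
  have hdvd := X_pow_dvd_xiSeq_sub_of_le q hq β a g h
  have h0 : PowerSeries.coeff (R := K) d (xiSeq q β a g k - xiSeq q β a g (d + 1)) = 0 := by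
    rw [PowerSeries.X_pow_dvd_iff] at hdvd
    exact hdvd d (by nlinarith)
  rw [map_sub, sub_eq_zero] at h0
  exact h0

lemma X_pow_dvd_xiFix_sub (q : ℕ) (hq : 1 ≤ q) (β a : K) (g : Polynomial K) (k : ℕ) :
    (PowerSeries.X : PowerSeries K) ^ k ∣ xiFix q β a g - xiSeq q β a g k := by
  rw [PowerSeries.X_pow_dvd_iff]
  intro d hd
  rw [map_sub, sub_eq_zero]
  exact (coeff_xiSeq_eq q hq β a g hd).symm

lemma xiFix_eq (q : ℕ) (hq : 1 ≤ q) (β a : K) (g : Polynomial K) :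
    xiFix q β a g = psi q β a g (xiFix q β a g) := by
  ext d
  have h1 : PowerSeries.coeff (R := K) d (xiFix q β a g) =
      PowerSeries.coeff (R := K) d (psi q β a g (xiSeq q β a g (d + 1))) := by
    rw [← coeff_xiSeq_eq q hq β a g (show d + 1 ≤ d + 2 by omega)]
    rfl
  have h2 := (dvd_psi_sub q β a g (xiFix q β a g) (xiSeq q β a g (d + 1)))
  have h3 : (PowerSeries.X : PowerSeries K) ^ (d + 1) ∣
      psi q β a g (xiFix q β a g) - psi q β a g (xiSeq q β a g (d + 1)) := by
    refine dvd_trans ?_ h2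
    calc (PowerSeries.X : PowerSeries K) ^ (d + 1)
        ∣ (PowerSeries.X : PowerSeries K) ^ q * PowerSeries.X ^ (d + 1) :=
          dvd_mul_left _ _
      _ ∣ PowerSeries.X ^ q * (xiFix q β a g - xiSeq q β a g (d + 1)) :=
          mul_dvd_mul dvd_rfl (X_pow_dvd_xiFix_sub q hq β a g (d + 1))
  have h4 : PowerSeries.coeff (R := K) d
      (psi q β a g (xiFix q β a g) - psi q β a g (xiSeq q β a g (d + 1))) = 0 := by
    rw [PowerSeries.X_pow_dvd_iff] at h3
    exact h3 d (by omega)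
  rw [map_sub, sub_eq_zero] at h4
  rw [h1, ← h4]

end WildHelper

namespace WildHelper2

open WildHelper

variable {K : Type*} [Field K]

/-- The unit part of the fixed point. -/
def uPart (q : ℕ) (β a : K) (g : Polynomial K) : PowerSeries K :=
  (PowerSeries.X * xiFix q β a g - (PowerSeries.C (R := K)) β) *
    (g.eval₂ ((PowerSeries.C (R := K))) ((PowerSeries.C (R := K)) a + xiFix q β a g))

lemma xiFix_eq_X_pow_mul (q : ℕ) (hq : 1 ≤ q) (β a : K) (g : Polynomial K) :
    xiFix q β a g = PowerSeries.X ^ q * uPart q β a g := by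
  have := xiFix_eq q hq β a g
  rw [this, psi, uPart]
  ring

lemma constantCoeff_xiFix (q : ℕ) (hq : 1 ≤ q) (β a : K) (g : Polynomial K) :
    PowerSeries.constantCoeff (R := K) (xiFix q β a g) = 0 := by
  have h := xiFix_eq_X_pow_mul q hq β a g
  have hd : (PowerSeries.X : PowerSeries K) ^ q ∣ xiFix q β a g := ⟨_, h⟩
  rw [PowerSeries.X_pow_dvd_iff] at hd
  simpa [PowerSeries.coeff_zero_eq_constantCoeff] using hd 0 (by omega)

lemma constantCoeff_eval₂ (a : K) (g : Polynomial K) (z : PowerSeries K)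
    (hz : PowerSeries.constantCoeff (R := K) z = 0) :
    PowerSeries.constantCoeff (R := K)
      (g.eval₂ ((PowerSeries.C (R := K))) ((PowerSeries.C (R := K)) a + z)) = g.eval a := by
  rw [Polynomial.hom_eval₂]
  have h1 : (PowerSeries.constantCoeff (R := K)).comp ((PowerSeries.C (R := K))) = RingHom.id K := by
    ext c; simp
  have h2 : PowerSeries.constantCoeff (R := K) ((PowerSeries.C (R := K)) a + z) = a := by
    simp [hz]
  rw [h1, h2]
  rfl

lemma constantCoeff_uPart (q : ℕ) (hq : 1 ≤ q) (β a : K) (g : Polynomial K) :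
    PowerSeries.constantCoeff (R := K) (uPart q β a g) = -β * g.eval a := by
  rw [uPart, map_mul, map_sub, map_mul,
    constantCoeff_eval₂ a g _ (constantCoeff_xiFix q hq β a g)]
  simp

lemma coeff_q_xiFix (q : ℕ) (hq : 1 ≤ q) (β a : K) (g : Polynomial K) :
    PowerSeries.coeff (R := K) q (xiFix q β a g) = -β * g.eval a := by
  rw [xiFix_eq_X_pow_mul q hq β a g]
  have h := PowerSeries.coeff_X_pow_mul (uPart q β a g) q 0
  rw [Nat.zero_add] at h
  rw [h, PowerSeries.coeff_zero_eq_constantCoeff, constantCoeff_uPart q hq β a g]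

lemma xiFix_ne_C (q : ℕ) (hq : 1 ≤ q) (β a : K) (g : Polynomial K)
    (hβ : β ≠ 0) (hga : g.eval a ≠ 0) (c : K) : xiFix q β a g ≠ (PowerSeries.C (R := K)) c := by
  intro h
  have h1 := coeff_q_xiFix q hq β a g
  rw [h, PowerSeries.coeff_C, if_neg (by omega)] at h1
  rcases mul_eq_zero.mp h1.symm with h' | h'
  · exact hβ (neg_eq_zero.mp h')
  · exact hga h'

lemma eval₂_xiFix_ne_zero [IsAlgClosed K] (q : ℕ) (hq : 1 ≤ q) (β a : K) (g : Polynomial K)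
    (hβ : β ≠ 0) (hga : g.eval a ≠ 0) (P : Polynomial K) (hP : P ≠ 0) :
    P.eval₂ ((PowerSeries.C (R := K))) ((PowerSeries.C (R := K)) a + xiFix q β a g) ≠ 0 := by
  suffices H : ∀ N : ℕ, ∀ P : Polynomial K, P ≠ 0 → P.natDegree = N →
      P.eval₂ ((PowerSeries.C (R := K))) ((PowerSeries.C (R := K)) a + xiFix q β a g) ≠ 0 from
    H _ P hP rfl
  intro N
  induction N using Nat.strong_induction_on with
  | _ N ih =>
    intro P hP hN
    rcases Nat.eq_zero_or_pos N with h0 | hpos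
    · subst h0
      obtain ⟨c, rfl⟩ := Polynomial.natDegree_eq_zero.mp hN
      have hc : c ≠ 0 := by simpa using hP
      rw [Polynomial.eval₂_C]
      exact fun h => hc (by simpa using h)
    · have hdeg : P.degree ≠ 0 := by
        rw [Polynomial.degree_eq_natDegree hP, hN]
        exact_mod_cast (by omega : (N : ℤ) ≠ 0)
      obtain ⟨c, hc⟩ := IsAlgClosed.exists_root P hdeg
      obtain ⟨Q, hQ⟩ := Polynomial.dvd_iff_isRoot.mpr hc
      have hQ0 : Q ≠ 0 := fun h => hP (by rw [hQ, h, mul_zero])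
      have hQdeg : Q.natDegree = N - 1 := by
        have := Polynomial.natDegree_mul (Polynomial.X_sub_C_ne_zero c) hQ0
        rw [← hQ, hN, Polynomial.natDegree_X_sub_C] at this
        omega
      have hfac : (Polynomial.X - Polynomial.C c).eval₂ ((PowerSeries.C (R := K)))
          ((PowerSeries.C (R := K)) a + xiFix q β a g) ≠ 0 := by
        intro h
        simp only [Polynomial.eval₂_sub, Polynomial.eval₂_X, Polynomial.eval₂_C] at h
        apply xiFix_ne_C q hq β a g hβ hga (c - a)
        rw [map_sub]
        linear_combination h
      rw [hQ, Polynomial.eval₂_mul]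
      exact mul_ne_zero hfac (ih (N - 1) (by omega) Q hQ0 hQdeg)

end WildHelper2

namespace WildHelper3

open WildHelper WildHelper2 HahnSeries

variable {K : Type*} [Field K]

lemma eq_zero_of_add_nonpos {x y : WithTop ℤ} (hxy : x + y = 0) (hx : x ≤ 0) (hy : y ≤ 0) :
    x = 0 := by
  cases x with
  | top => simp at hxy
  | coe x =>
    cases y with
    | top => simp at hxy
    | coe y =>
      rw [← WithTop.coe_add, show ((0 : WithTop ℤ)) = ((0 : ℤ) : WithTop ℤ) from rfl,
        WithTop.coe_eq_coe] at hxy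
      rw [show ((0 : WithTop ℤ)) = ((0 : ℤ) : WithTop ℤ) from rfl, WithTop.coe_le_coe] at hx hy
      rw [show ((0 : WithTop ℤ)) = ((0 : ℤ) : WithTop ℤ) from rfl, WithTop.coe_eq_coe]
      omega

lemma addVal_ofPowerSeries_unit (u : PowerSeries K)
    (hu : PowerSeries.constantCoeff (R := K) u ≠ 0) :
    addVal ℤ K (ofPowerSeries ℤ K u) = 0 := by
  set ι := ofPowerSeries ℤ K
  have hmul : u * u⁻¹ = 1 := PowerSeries.mul_inv_cancel u hu
  have h1 : addVal ℤ K (ι u) + addVal ℤ K (ι u⁻¹) = 0 := by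
    rw [← AddValuation.map_mul, ← map_mul, hmul, map_one, AddValuation.map_one]
  have hx : addVal ℤ K (ι u) ≤ 0 := by
    apply addVal_le_of_coeff_ne_zero (g := (0 : ℤ))
    rw [show ((0 : ℤ)) = ((0 : ℕ) : ℤ) from rfl, ofPowerSeries_apply_coeff]
    simpa [PowerSeries.coeff_zero_eq_constantCoeff] using hu
  have hy : addVal ℤ K (ι u⁻¹) ≤ 0 := by
    apply addVal_le_of_coeff_ne_zero (g := (0 : ℤ))
    rw [show ((0 : ℤ)) = ((0 : ℕ) : ℤ) from rfl, ofPowerSeries_apply_coeff]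
    rw [PowerSeries.coeff_zero_eq_constantCoeff, PowerSeries.constantCoeff_inv]
    simpa using hu
  exact eq_zero_of_add_nonpos h1 hx hy

lemma addVal_ofPowerSeries_xiFix [IsAlgClosed K] (q : ℕ) (hq : 1 ≤ q) (β a : K)
    (g : Polynomial K) (hβ : β ≠ 0) (hga : g.eval a ≠ 0) :
    addVal ℤ K (ofPowerSeries ℤ K (xiFix q β a g)) = ((q : ℤ) : WithTop ℤ) := by
  have h := xiFix_eq_X_pow_mul q hq β a g
  have hcc : PowerSeries.constantCoeff (R := K) (uPart q β a g) ≠ 0 := by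
    rw [constantCoeff_uPart q hq β a g]
    exact mul_ne_zero (neg_ne_zero.mpr hβ) hga
  rw [h, map_mul, AddValuation.map_mul, map_pow, ofPowerSeries_X,
    addVal_ofPowerSeries_unit _ hcc, add_zero, single_pow, one_pow]
  have h2 : ((q : ℕ) • (1 : ℤ)) = (q : ℤ) := by simp
  rw [h2, addVal_apply, orderTop_single (one_ne_zero)]

end WildHelper3

namespace WildHelper3

lemma nsmul_coe_withTop (j : ℕ) (c : ℤ) :
    j • ((c : ℤ) : WithTop ℤ) = (((j : ℤ) * c : ℤ) : WithTop ℤ) := by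
  induction j with
  | zero => simp
  | succ j ih =>
      rw [succ_nsmul, ih, ← WithTop.coe_add]
      congr 1
      push_cast
      ring

end WildHelper3

set_option maxHeartbeats 2000000 in
open WildHelper WildHelper2 WildHelper3 HahnSeries in
/-- There is a place ν of L above P_{x−a} whose ramification index
e = ν(x − a) equals q; in particular p ∣ e (wild ramification) and gcd(e, m) = 1. -/
theorem exists_wild_place_above_x_sub_a
    (K : Type*) [Field K] [IsAlgClosed K] (p : ℕ) (hp : p.Prime) [CharP K p]
    (n : ℕ) (hn : 1 ≤ n) (q m : ℕ) (hq : q = p ^ n) (hm : m = q + 1)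
    (a b : K) (hb : b ≠ 0)
    (g : Polynomial K) (hga : g.eval a ≠ 0) (hgdeg : g.natDegree < m)
    (hgcd : Nat.gcd (m - g.natDegree) m = 1)
    (L : Type*) [Field L] [Algebra (RatFunc K) L]
    (hdeg : Module.finrank (RatFunc K) L = m)
    (y : L) (hgen : Algebra.adjoin (RatFunc K) {y} = ⊤)
    (heq : (y - algebraMap (RatFunc K) L (RatFunc.C a)) ^ m
        + algebraMap (RatFunc K) L (RatFunc.C b) * (y - algebraMap (RatFunc K) L (RatFunc.C a))
        = algebraMap (RatFunc K) L
            ((RatFunc.X - RatFunc.C a) ^ m / algebraMap (Polynomial K) (RatFunc K) g))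
 :
    ∃ ν : AddValuation L (WithTop ℤ),
      Function.Surjective ν ∧
      (∀ c : K, c ≠ 0 → ν (algebraMap (RatFunc K) L (RatFunc.C c)) = 0) ∧
      0 < ν (algebraMap (RatFunc K) L (RatFunc.X - RatFunc.C a)) ∧
      ν (algebraMap (RatFunc K) L (RatFunc.X - RatFunc.C a)) = ((q : ℤ) : WithTop ℤ) ∧
      p ∣ q ∧ Nat.gcd q m = 1 := by
  -- numerics
  have hq2 : 2 ≤ q := by
    calc 2 ≤ p := hp.two_le
    _ = p ^ 1 := (pow_one p).symm
    _ ≤ p ^ n := Nat.pow_le_pow_right hp.pos hn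
    _ = q := hq.symm
  have hq1 : 1 ≤ q := by omega
  have hm3 : 3 ≤ m := by omega
  -- the q-th root of b
  obtain ⟨β, hβq⟩ := IsAlgClosed.exists_pow_nat_eq b (show 0 < q by omega)
  have hβ : β ≠ 0 := by
    intro h; apply hb; rw [← hβq, h, zero_pow (by omega)]
  -- the power series fixed point and the embedding of K[X]
  set ι := ofPowerSeries ℤ K with hι
  set ξ := xiFix q β a g with hξ
  set ξL := ι ξ with hξL
  set ψ : Polynomial K →+* LaurentSeries K :=
    ι.comp (Polynomial.eval₂RingHom ((PowerSeries.C (R := K))) ((PowerSeries.C (R := K)) a + ξ)) with hψ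
  have hψapp : ∀ P : Polynomial K, ψ P =
      ι (P.eval₂ ((PowerSeries.C (R := K))) ((PowerSeries.C (R := K)) a + ξ)) := fun P => rfl
  have hψinj : Function.Injective ψ := by
    rw [injective_iff_map_eq_zero]
    intro P hP
    by_contra hP0
    apply eval₂_xiFix_ne_zero q hq1 β a g hβ hga P hP0
    apply ofPowerSeries_injective (Γ := ℤ) (R := K)
    rw [← hψapp P, hP, map_zero]
  set φ₀ : RatFunc K →+* LaurentSeries K := IsFractionRing.lift hψinj with hφ₀
  have hφ₀a : ∀ P : Polynomial K, φ₀ (algebraMap (Polynomial K) (RatFunc K) P) = ψ P :=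
    fun P => IsFractionRing.lift_algebraMap hψinj P
  letI : Algebra (RatFunc K) (LaurentSeries K) := φ₀.toAlgebra
  have halg : (algebraMap (RatFunc K) (LaurentSeries K)) = φ₀ := rfl
  -- key elements of the Laurent series field
  set tL := ι (PowerSeries.X * ξ - (PowerSeries.C (R := K)) β) with htL
  set zL := ι ((PowerSeries.C (R := K)) a) + tL with hzL
  set gLau := ψ g with hGLdef
  have hg0 : g ≠ 0 := fun h => hga (by rw [h]; simp)
  have hGL : gLau ≠ 0 := fun h => hg0 (hψinj (by rw [← hGLdef, h, map_zero]))
  have hξ0 : ξ ≠ 0 := by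
    have := xiFix_ne_C q hq1 β a g hβ hga 0
    simpa using this
  have hξL0 : ξL ≠ 0 := by
    intro h
    exact hξ0 (ofPowerSeries_injective (show ι ξ = ι 0 by rw [map_zero]; exact h))
  -- the key identity in Laurent series
  have hkey : ξL = (ι PowerSeries.X) ^ q * tL * gLau := by
    rw [hξL, hξ]
    conv_lhs => rw [xiFix_eq q hq1 β a g]
    rw [psi, map_mul, map_mul, map_pow]
    rfl
  -- characteristic of Laurent series
  haveI : Fact (Nat.Prime p) := ⟨hp⟩
  haveI hcharLS : CharP (LaurentSeries K) p :=
    charP_of_injective_ringHom (C_injective (Γ := ℤ) (R := K)) p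
  have htq : tL ^ q = (ι PowerSeries.X * ξL) ^ q - ι ((PowerSeries.C (R := K)) b) := by
    have h1 : tL = ι PowerSeries.X * ξL - ι ((PowerSeries.C (R := K)) β) := by
      rw [htL, map_sub, map_mul]
    rw [h1, hq, sub_pow_char_pow]
    congr 1
    rw [← map_pow, ← map_pow, ← hq, hβq]
  -- the Laurent series root equation
  have hrootLS : tL ^ m + ι ((PowerSeries.C (R := K)) b) * tL = ξL ^ m / gLau := by
    rw [eq_div_iff hGL, hm, pow_succ, pow_succ]
    linear_combination (gLau * tL) * htq - (ξL ^ q) * hkey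
  -- finite dimensionality and power basis
  haveI : FiniteDimensional (RatFunc K) L := FiniteDimensional.of_finrank_pos (by rw [hdeg]; omega)
  have hyInt : IsIntegral (RatFunc K) y := IsIntegral.of_finite _ y
  set pb : PowerBasis (RatFunc K) L := (Algebra.adjoin.powerBasis hyInt).map
    ((Subalgebra.equivOfEq _ _ hgen).trans Subalgebra.topEquiv) with hpb
  have hgenpb : pb.gen = y := by
    simp [hpb, Algebra.adjoin.powerBasis_gen]
  have hminnat : (minpoly (RatFunc K) y).natDegree = m := by
    rw [← hgenpb, pb.natDegree_minpoly, ← PowerBasis.finrank pb, hdeg]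
  -- the minimal polynomial is the explicit equation
  set Fpoly : Polynomial (RatFunc K) := (Polynomial.X - Polynomial.C (RatFunc.C a)) ^ m +
      (Polynomial.C (RatFunc.C b) * (Polynomial.X - Polynomial.C (RatFunc.C a)) -
       Polynomial.C ((RatFunc.X - RatFunc.C a) ^ m / algebraMap (Polynomial K) (RatFunc K) g))
    with hF
  have hP1monic : ((Polynomial.X - Polynomial.C (RatFunc.C a)) ^ m).Monic :=
    (Polynomial.monic_X_sub_C _).pow m
  have hP1deg : ((Polynomial.X - Polynomial.C (RatFunc.C a)) ^ m).degree = (m : WithBot ℕ) := by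
    rw [Polynomial.degree_pow, Polynomial.degree_X_sub_C]
    simp
  have hQle : (Polynomial.C (RatFunc.C b) * (Polynomial.X - Polynomial.C (RatFunc.C a)) -
       Polynomial.C ((RatFunc.X - RatFunc.C a) ^ m /
        algebraMap (Polynomial K) (RatFunc K) g)).degree ≤ 1 := by
    refine le_trans (Polynomial.degree_sub_le _ _) (max_le ?_ ?_)
    · refine le_trans (Polynomial.degree_mul_le _ _) ?_
      rw [Polynomial.degree_X_sub_C]
      calc Polynomial.degree (Polynomial.C (RatFunc.C b)) + 1 ≤ 0 + 1 :=
            add_le_add_left Polynomial.degree_C_le 1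
        _ = 1 := by norm_num
    · exact le_trans Polynomial.degree_C_le (by norm_num)
  have hQlt : (Polynomial.C (RatFunc.C b) * (Polynomial.X - Polynomial.C (RatFunc.C a)) -
       Polynomial.C ((RatFunc.X - RatFunc.C a) ^ m /
        algebraMap (Polynomial K) (RatFunc K) g)).degree <
      ((Polynomial.X - Polynomial.C (RatFunc.C a)) ^ m).degree := by
    rw [hP1deg]
    refine lt_of_le_of_lt hQle ?_
    exact_mod_cast (show (1 : ℕ) < m by omega)
  have hFmonic : Fpoly.Monic := hP1monic.add_of_left hQlt
  have hFdeg : Fpoly.natDegree = m := by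
    have hdeg' : Fpoly.degree = (m : WithBot ℕ) :=
      (Polynomial.degree_add_eq_left_of_degree_lt hQlt).trans hP1deg
    exact Polynomial.natDegree_eq_of_degree_eq_some hdeg'
  have hrootF : (Polynomial.aeval y) Fpoly = 0 := by
    rw [hF]
    simp only [map_add, map_sub, map_mul, map_pow, Polynomial.aeval_X, Polynomial.aeval_C]
    linear_combination heq
  have hmin : minpoly (RatFunc K) y = Fpoly := by
    obtain ⟨c, hc⟩ := minpoly.dvd (RatFunc K) y hrootF
    have hmin0 : minpoly (RatFunc K) y ≠ 0 := minpoly.ne_zero hyInt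
    have hc0 : c ≠ 0 := by
      rintro rfl
      rw [mul_zero] at hc
      exact hFmonic.ne_zero hc
    have hnc : c.natDegree = 0 := by
      have hh := Polynomial.natDegree_mul hmin0 hc0
      rw [← hc, hFdeg, hminnat] at hh
      omega
    obtain ⟨c0, rfl⟩ := Polynomial.natDegree_eq_zero.mp hnc
    have hlc := congrArg Polynomial.leadingCoeff hc
    rw [hFmonic.leadingCoeff, Polynomial.leadingCoeff_mul,
      (minpoly.monic hyInt).leadingCoeff, one_mul, Polynomial.leadingCoeff_C] at hlc
    rw [hc, ← hlc, map_one, mul_one]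
  -- images of the basic rational functions under φ₀
  have h1 : algebraMap (RatFunc K) (LaurentSeries K) (RatFunc.C a) = ι ((PowerSeries.C (R := K)) a) := by
    rw [halg, ← RatFunc.algebraMap_C, hφ₀a, hψapp]
    rw [Polynomial.eval₂_C]
  have h2 : algebraMap (RatFunc K) (LaurentSeries K) (RatFunc.C b) = ι ((PowerSeries.C (R := K)) b) := by
    rw [halg, ← RatFunc.algebraMap_C, hφ₀a, hψapp]
    rw [Polynomial.eval₂_C]
  have h2β : algebraMap (RatFunc K) (LaurentSeries K) (RatFunc.C β) = ι ((PowerSeries.C (R := K)) β) := by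
    rw [halg, ← RatFunc.algebraMap_C, hφ₀a, hψapp]
    rw [Polynomial.eval₂_C]
  have hXa : algebraMap (RatFunc K) (LaurentSeries K) (RatFunc.X - RatFunc.C a) = ξL := by
    rw [halg, map_sub, ← RatFunc.algebraMap_X, ← RatFunc.algebraMap_C, hφ₀a, hφ₀a,
      hψapp, hψapp, Polynomial.eval₂_X, Polynomial.eval₂_C, ← map_sub, add_sub_cancel_left]
  have h3 : algebraMap (RatFunc K) (LaurentSeries K)
      ((RatFunc.X - RatFunc.C a) ^ m / algebraMap (Polynomial K) (RatFunc K) g)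
      = ξL ^ m / gLau := by
    rw [map_div₀, map_pow, hXa, halg, hφ₀a]
  -- the image of y is a root of the minimal polynomial
  have hzroot : (Polynomial.aeval zL) (minpoly (RatFunc K) pb.gen) = 0 := by
    rw [hgenpb, hmin, hF]
    simp only [map_add, map_sub, map_mul, map_pow, Polynomial.aeval_X, Polynomial.aeval_C]
    rw [h1, h2, h3]
    have hzt : zL - ι ((PowerSeries.C (R := K)) a) = tL := by rw [hzL]; ring
    rw [hzt]
    linear_combination hrootLS
  -- the embedding of L into Laurent series
  set φA : L →ₐ[RatFunc K] LaurentSeries K := pb.lift zL hzroot with hφA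
  have hφy : φA y = zL := by
    conv_lhs => rw [← hgenpb]
    exact pb.lift_gen zL hzroot
  have hφalg : ∀ s : RatFunc K, φA (algebraMap (RatFunc K) L s) = φ₀ s := fun s => φA.commutes s
  -- the valuation
  set ν : AddValuation L (WithTop ℤ) := (addVal ℤ K).comap (φA : L →+* LaurentSeries K) with hν
  have hνapp : ∀ u : L, ν u = addVal ℤ K (φA u) := fun u => rfl
  -- the valuation of x - a
  have hνX : ν (algebraMap (RatFunc K) L (RatFunc.X - RatFunc.C a)) = ((q : ℤ) : WithTop ℤ) := by
    rw [hνapp, hφalg, ← halg, hXa]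
    exact addVal_ofPowerSeries_xiFix q hq1 β a g hβ hga
  -- constants have valuation zero
  have hνC : ∀ c : K, c ≠ 0 → ν (algebraMap (RatFunc K) L (RatFunc.C c)) = 0 := by
    intro c hc
    rw [hνapp, hφalg]
    have hCc : φ₀ (RatFunc.C c) = ι ((PowerSeries.C (R := K)) c) := by
      rw [← RatFunc.algebraMap_C, hφ₀a, hψapp, Polynomial.eval₂_C]
    rw [hCc]
    exact addVal_ofPowerSeries_unit _ (by simpa using hc)
  -- the uniformizer
  set uElt : L := (y - algebraMap (RatFunc K) L (RatFunc.C a)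
      + algebraMap (RatFunc K) L (RatFunc.C β))
      / (algebraMap (RatFunc K) L (RatFunc.X - RatFunc.C a)) with hu
  have hφu : φA uElt = ι PowerSeries.X := by
    rw [hu, map_div₀, map_add, map_sub, hφy, hφalg, hφalg, hφalg]
    have hca : φ₀ (RatFunc.C a) = ι ((PowerSeries.C (R := K)) a) := by
      rw [← RatFunc.algebraMap_C, hφ₀a, hψapp, Polynomial.eval₂_C]
    have hcβ : φ₀ (RatFunc.C β) = ι ((PowerSeries.C (R := K)) β) := by
      rw [← RatFunc.algebraMap_C, hφ₀a, hψapp, Polynomial.eval₂_C]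
    have hxa : φ₀ (RatFunc.X - RatFunc.C a) = ξL := by rw [← halg]; exact hXa
    rw [hca, hcβ, hxa]
    have hnum : zL - ι ((PowerSeries.C (R := K)) a) + ι ((PowerSeries.C (R := K)) β) = ι PowerSeries.X * ξL := by
      rw [hzL, htL, map_sub, map_mul]; ring
    rw [hnum, mul_div_assoc, div_self hξL0, mul_one]
  have hν1 : ν uElt = ((1 : ℤ) : WithTop ℤ) := by
    rw [hνapp, hφu, hι, ofPowerSeries_X, addVal_apply, orderTop_single one_ne_zero]
  have hνinv : ν uElt⁻¹ = ((-1 : ℤ) : WithTop ℤ) := by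
    rw [AddValuation.map_inv, hν1]
    rfl
  have hsurj : Function.Surjective ν := by
    intro γ
    induction γ using WithTop.recTopCoe with
    | top => exact ⟨0, AddValuation.map_zero ν⟩
    | coe k =>
      rcases le_or_gt 0 k with hk | hk
      · refine ⟨uElt ^ k.toNat, ?_⟩
        rw [AddValuation.map_pow, hν1, nsmul_coe_withTop]
        congr 1
        omega
      · refine ⟨(uElt⁻¹) ^ (-k).toNat, ?_⟩
        rw [AddValuation.map_pow, hνinv, nsmul_coe_withTop]
        congr 1
        omega
  refine ⟨ν, hsurj, hνC, ?_, hνX, ?_, ?_⟩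
  · rw [hνX]
    exact_mod_cast (show (0 : ℤ) < (q : ℤ) by exact_mod_cast (by omega : 0 < q))
  · rw [hq]
    exact dvd_pow_self p (by omega)
  · rw [hm]
    rw [Nat.gcd_self_add_right, Nat.gcd_one_right]
end WildHelper
end
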